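/- arXiv:2503.06013 — 12 statements merged into one kernel-verified Lean document; each statement's English description precedes it below -/
import Mathlib

section
/- Let ε ∈ ℂ*, let u : ℤ × ℤ → ℂ be nowhere zero, and define U(l,m) = ε^m · u(l,m). If u satisfies ε·u(l+1,m+1) − u(l,m) = ε/u(l,m+1) − 1/u(l+1,m) for all l,m, then U satisfies the non-autonomous discrete KdV equation U(l+1,m+1) − U(l,m) = (q(m+1) − p(l))/U(l,m+1) − (q(m) − p(l+1))/U(l+1,m) with p(l) = 0 and q(m) = ε^(2m). -/
theorem stmt_1 (ε : ℂ) (hε : ε ≠ 0) (u : ℤ × ℤ → ℂ)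
    (hnz : ∀ l m : ℤ, u (l, m) ≠ 0)
    (h : ∀ l m : ℤ,
      ε * u (l + 1, m + 1) - u (l, m) = ε / u (l, m + 1) - 1 / u (l + 1, m))
    (U : ℤ × ℤ → ℂ) (hU : ∀ l m : ℤ, U (l, m) = ε ^ m * u (l, m))
    (p q : ℤ → ℂ) (hp : ∀ l : ℤ, p l = 0) (hq : ∀ m : ℤ, q m = ε ^ (2 * m)) :
    ∀ l m : ℤ,
      U (l + 1, m + 1) - U (l, m)
        = (q (m + 1) - p l) / U (l, m + 1) - (q m - p (l + 1)) / U (l + 1, m) := by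
  intro l m
  have hz : (ε : ℂ) ^ m ≠ 0 := zpow_ne_zero m hε
  have h1 := h l m
  simp only [hU, hp, hq, sub_zero]
  have e1 : ε ^ (m + 1) = ε ^ m * ε := by rw [zpow_add_one₀ hε]
  have e2 : ε ^ (2 * (m + 1)) = ε ^ m * ε ^ m * ε * ε := by
    rw [show 2 * (m + 1) = m + m + 1 + 1 by ring, zpow_add_one₀ hε, zpow_add_one₀ hε, zpow_add₀ hε]
  have e3 : ε ^ (2 * m) = ε ^ m * ε ^ m := by rw [two_mul, zpow_add₀ hε]
  rw [e1, e2, e3]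
  have key : ε ^ m * ε ^ m * ε * ε / (ε ^ m * ε * u (l, m + 1))
      - ε ^ m * ε ^ m / (ε ^ m * u (l + 1, m))
      = ε ^ m * (ε / u (l, m + 1) - 1 / u (l + 1, m)) := by
    have a := hnz l (m + 1)
    have b := hnz (l + 1) m
    field_simp
  rw [key, ← h1]
  ring
end

section
/- Let ε ∈ ℂ* and γ : ℤ → ℂ. Suppose τ : ℤ × ℤ → ℂ is nowhere zero and satisfies the bilinear equation τ(l+2,m+1)·τ(l,m) − τ(l+2,m)·τ(l,m+1) − (γ(l)/ε^m)·τ(l+1,m+1)·τ(l+1,m) = 0 for all l,m. Then u(l,m) := τ(l,m)·τ(l+1,m+1)/(τ(l+1,m)·τ(l,m+1)) satisfies ε·u(l+1,m+1) − u(l,m) = ε/u(l,m+1) − 1/u(l+1,m). -/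
/-!
Write `c m = γ l / ε ^ m`, so that `ε * c (m + 1) = c m`. Dividing the bilinear equation
at `m` by suitable τ-values gives `u(l,m) - 1/u(l+1,m) = c m * τ(l+1,m+1)² / (τ(l,m+1) τ(l+2,m+1))`,
and dividing it at `m + 1` gives `u(l+1,m+1) - 1/u(l,m+1) = c (m+1)` times the same quotient.
Hence the two sides of the claimed equation agree.
-/

section CrossRatio

variable {K : Type*} [Field K] (τ : ℤ × ℤ → K)

def crossRatio (l m : ℤ) : K :=
  τ (l, m) * τ (l + 1, m + 1) / (τ (l + 1, m) * τ (l, m + 1))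

variable {τ}

theorem crossRatio_sub_inv_crossRatio_succ_left (hτ : ∀ l m : ℤ, τ (l, m) ≠ 0) {c : K} {l m : ℤ}
    (h : τ (l + 2, m + 1) * τ (l, m) - τ (l + 2, m) * τ (l, m + 1)
      - c * τ (l + 1, m + 1) * τ (l + 1, m) = 0) :
    crossRatio τ l m - (crossRatio τ (l + 1) m)⁻¹
      = c * τ (l + 1, m + 1) ^ 2 / (τ (l, m + 1) * τ (l + 2, m + 1)) := by
  have hl : l + 1 + 1 = l + 2 := by ring
  simp only [crossRatio, hl]
  have := hτ l m; have := hτ (l + 1) m; have := hτ (l + 2) m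
  have := hτ l (m + 1); have := hτ (l + 1) (m + 1); have := hτ (l + 2) (m + 1)
  field_simp
  linear_combination h

theorem crossRatio_succ_left_sub_inv_crossRatio (hτ : ∀ l m : ℤ, τ (l, m) ≠ 0) {c : K} {l m : ℤ}
    (h : τ (l + 2, m + 1) * τ (l, m) - τ (l + 2, m) * τ (l, m + 1)
      - c * τ (l + 1, m + 1) * τ (l + 1, m) = 0) :
    crossRatio τ (l + 1) m - (crossRatio τ l m)⁻¹
      = c * τ (l + 1, m) ^ 2 / (τ (l, m) * τ (l + 2, m)) := by
  have hl : l + 1 + 1 = l + 2 := by ring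
  simp only [crossRatio, hl]
  have := hτ l m; have := hτ (l + 1) m; have := hτ (l + 2) m
  have := hτ l (m + 1); have := hτ (l + 1) (m + 1); have := hτ (l + 2) (m + 1)
  field_simp
  linear_combination h

end CrossRatio

theorem stmt_2 (ε : ℂ) (hε : ε ≠ 0) (γ : ℤ → ℂ) (τ : ℤ × ℤ → ℂ)
    (hnz : ∀ l m : ℤ, τ (l, m) ≠ 0)
    (hbil : ∀ l m : ℤ,
      τ (l + 2, m + 1) * τ (l, m) - τ (l + 2, m) * τ (l, m + 1)
        - (γ l / ε ^ m) * τ (l + 1, m + 1) * τ (l + 1, m) = 0)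
    (u : ℤ × ℤ → ℂ)
    (hu : ∀ l m : ℤ,
      u (l, m) = τ (l, m) * τ (l + 1, m + 1) / (τ (l + 1, m) * τ (l, m + 1))) :
    ∀ l m : ℤ,
      ε * u (l + 1, m + 1) - u (l, m) = ε / u (l, m + 1) - 1 / u (l + 1, m) := by
  intro l m
  have hu' : ∀ l m : ℤ, u (l, m) = crossRatio τ l m := hu
  have hdiff := crossRatio_sub_inv_crossRatio_succ_left hnz (hbil l m)
  have hdiff_succ := crossRatio_succ_left_sub_inv_crossRatio hnz (hbil l (m + 1))
  have hc : ε * (γ l / ε ^ (m + 1)) = γ l / ε ^ m := by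
    rw [zpow_add_one₀ hε]; field_simp
  simp only [hu']
  linear_combination ε * hdiff_succ - hdiff
    + τ (l + 1, m + 1) ^ 2 / (τ (l, m + 1) * τ (l + 2, m + 1)) * hc
end

section
/- Let ε, α₀, β₀ ∈ ℂ* and set α(l) = ε^l·α₀, β(m) = ε^m·β₀. Suppose F, G, H : ℤ × ℤ → ℂ* satisfy H(l,m) = 1/(F(l,m)·G(l,m)), the l-direction system F(l+1,m)·F(l,m) = (G(l+1,m)+1)/(α(l+1)²·G(l+1,m)), G(l+1,m)·G(l,m) = β(m)²·(F(l,m)+1)/(α(l+1)²·F(l,m)), and the m-direction system G(l,m+1)·G(l,m) = β(m)²·(H(l,m+1)+α(l)²)/(H(l,m+1)·(β(m)²·H(l,m+1)+α(l)²)), H(l,m+1)·H(l,m) = α(l)²/(G(l,m)·(G(l,m)+1)), for all l,m. Then u(l,m) := 1/(ε^(1/2)·α(l)·F(l,m)), where ε^(1/2) is a fixed square root of ε, satisfies ε·u(l+1,m+1) − u(l,m) = ε/u(l,m+1) − 1/u(l+1,m) for all l,m. -/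
theorem stmt_3 (ε α₀ β₀ : ℂ) (hε : ε ≠ 0) (hα₀ : α₀ ≠ 0) (hβ₀ : β₀ ≠ 0)
    (s : ℂ) (hs : s ^ 2 = ε)
    (α β : ℤ → ℂ) (hα : ∀ l : ℤ, α l = ε ^ l * α₀) (hβ : ∀ m : ℤ, β m = ε ^ m * β₀)
    (F G H : ℤ × ℤ → ℂ)
    (hF : ∀ l m : ℤ, F (l, m) ≠ 0) (hG : ∀ l m : ℤ, G (l, m) ≠ 0)
    (hH : ∀ l m : ℤ, H (l, m) ≠ 0)
    (hFGH : ∀ l m : ℤ, H (l, m) = 1 / (F (l, m) * G (l, m)))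
    (hden1 : ∀ l m : ℤ, G (l, m) + 1 ≠ 0)
    (hden2 : ∀ l m : ℤ, (β m) ^ 2 * H (l, m) + (α l) ^ 2 ≠ 0)
    (hl1 : ∀ l m : ℤ,
      F (l + 1, m) * F (l, m) = (G (l + 1, m) + 1) / ((α (l + 1)) ^ 2 * G (l + 1, m)))
    (hl2 : ∀ l m : ℤ,
      G (l + 1, m) * G (l, m) = (β m) ^ 2 * (F (l, m) + 1) / ((α (l + 1)) ^ 2 * F (l, m)))
    (hm1 : ∀ l m : ℤ,
      G (l, m + 1) * G (l, m)
        = (β m) ^ 2 * (H (l, m + 1) + (α l) ^ 2)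
          / (H (l, m + 1) * ((β m) ^ 2 * H (l, m + 1) + (α l) ^ 2)))
    (hm2 : ∀ l m : ℤ,
      H (l, m + 1) * H (l, m) = (α l) ^ 2 / (G (l, m) * (G (l, m) + 1)))
    (u : ℤ × ℤ → ℂ)
    (hu : ∀ l m : ℤ, u (l, m) = 1 / (s * α l * F (l, m))) :
    ∀ l m : ℤ,
      ε * u (l + 1, m + 1) - u (l, m) = ε / u (l, m + 1) - 1 / u (l + 1, m) := by
  intro l m
  have E1 := hl1 l m
  have E2 := hl2 l m
  have E3 := hm1 l m
  have E4 := hm2 l m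
  have E5 := hm1 (l + 1) m
  have E6 := hm2 (l + 1) m
  have E7 := hl1 l (m + 1)
  have EH00 := hFGH l m
  have EH01 := hFGH l (m + 1)
  have EH10 := hFGH (l + 1) m
  have hgp1 := hden1 l m
  have hG10p1 := hden1 (l + 1) m
  have hf := hF l m
  have hg := hG l m
  have hf01 := hF l (m + 1)
  have hg01 := hG l (m + 1)
  have hf10 := hF (l + 1) m
  have hg10 := hG (l + 1) m
  have hf11 := hF (l + 1) (m + 1)
  have hg11 := hG (l + 1) (m + 1)
  have hh00 := hH l m
  have hh01 := hH l (m + 1)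
  have hh10 := hH (l + 1) m
  have hh11 := hH (l + 1) (m + 1)
  have ha : α l ≠ 0 := by rw [hα l]; exact mul_ne_zero (zpow_ne_zero _ hε) hα₀
  have ha1eq : α (l + 1) = ε * α l := by
    rw [hα (l + 1), hα l, zpow_add_one₀ hε]; ring
  have ha1 : α (l + 1) ≠ 0 := by rw [ha1eq]; exact mul_ne_zero hε ha
  have hb : β m ≠ 0 := by rw [hβ m]; exact mul_ne_zero (zpow_ne_zero _ hε) hβ₀
  have hs0 : s ≠ 0 := by intro h0; apply hε; rw [← hs, h0]; ring
  have hu11 := hu (l + 1) (m + 1)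
  have hu00 := hu l m
  have hu01 := hu l (m + 1)
  have hu10 := hu (l + 1) m
  clear hl1 hl2 hm1 hm2 hFGH hden1 hden2 hF hG hH hu hα hβ hα₀ hβ₀
  set a := α l with hadef
  set a1 := α (l + 1) with ha1def
  set b := β m with hbdef
  set f := F (l, m) with hfdef
  set g := G (l, m) with hgdef
  set f01 := F (l, m + 1) with hf01def
  set g01 := G (l, m + 1) with hg01def
  set h01v := H (l, m + 1) with hh01def
  set f10 := F (l + 1, m) with hf10def
  set g10 := G (l + 1, m) with hg10def
  set h10v := H (l + 1, m) with hh10def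
  set f11 := F (l + 1, m + 1) with hf11def
  set g11 := G (l + 1, m + 1) with hg11def
  set h11v := H (l + 1, m + 1) with hh11def
  set h00v := H (l, m) with hh00def
  have ra1 : a1 = s^2*a := by rw [ha1eq, ← hs]
  -- nonzero denominators of the m-direction equations
  have hD3 : h01v * (b ^ 2 * h01v + a ^ 2) ≠ 0 := by
    intro h0; rw [h0, div_zero] at E3; exact mul_ne_zero hg01 hg E3
  have hN3 : b ^ 2 * (h01v + a ^ 2) ≠ 0 := by
    intro h0; rw [h0, zero_div] at E3; exact mul_ne_zero hg01 hg E3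
  have hD5 : h11v * (b ^ 2 * h11v + a1 ^ 2) ≠ 0 := by
    intro h0; rw [h0, div_zero] at E5; exact mul_ne_zero hg11 hg10 E5
  have hN5 : b ^ 2 * (h11v + a1 ^ 2) ≠ 0 := by
    intro h0; rw [h0, zero_div] at E5; exact mul_ne_zero hg11 hg10 E5
  -- cleared (denominator-free) forms of the hypotheses
  have RH0 : h00v * (f * g) = 1 := by rw [EH00]; field_simp
  have RH1 : f01 * (h01v * g01) = 1 := by rw [EH01]; field_simp
  have RH2 : h10v * (f10 * g10) = 1 := by rw [EH10]; field_simp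
  have R4 : h01v * (h00v * (g * (g + 1))) = a ^ 2 := by
    linear_combination (eq_div_iff (mul_ne_zero hg hgp1)).mp E4
  have R3 : g01 * (g * (h01v * (b ^ 2 * h01v + a ^ 2))) = b ^ 2 * (h01v + a ^ 2) := by
    linear_combination (eq_div_iff hD3).mp E3
  have hg10P : g10 * (a1 ^ 2 * f * g) = b ^ 2 * (f + 1) := by
    linear_combination (eq_div_iff (mul_ne_zero (pow_ne_zero 2 ha1) hf)).mp E2
  have R1 : f10 * (f * (a1 ^ 2 * g10)) = g10 + 1 := by
    linear_combination (eq_div_iff (mul_ne_zero (pow_ne_zero 2 ha1) hg10)).mp E1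
  have R6 : h11v * (h10v * (g10 * (g10 + 1))) = a1 ^ 2 := by
    linear_combination (eq_div_iff (mul_ne_zero hg10 hG10p1)).mp E6
  have R5 : g11 * (g10 * (h11v * (b ^ 2 * h11v + a1 ^ 2))) = b ^ 2 * (h11v + a1 ^ 2) := by
    linear_combination (eq_div_iff hD5).mp E5
  have R7 : f11 * (f01 * (a1 ^ 2 * g11)) = g11 + 1 := by
    linear_combination (eq_div_iff (mul_ne_zero (pow_ne_zero 2 ha1) hg11)).mp E7

  have hh01P : h01v * (g+1) = a^2*f := by
    have pre : (h01v * (g+1)) * ((h00v*(g*(g+1))) * (f*g)) = (a^2*f) * ((h00v*(g*(g+1))) * (f*g)) := by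
      linear_combination (f*g + f*g^2) * R4 + (-a^2*f*g - a^2*f*g^2) * RH0
    exact mul_right_cancel₀ (mul_ne_zero (mul_ne_zero hh00 (mul_ne_zero hg hgp1)) (mul_ne_zero hf hg)) pre
  have hfg1 : f + g + 1 ≠ 0 := by
    intro h0
    have h1 : (h01v + a ^ 2) * (g + 1) = a ^ 2 * (f + g + 1) := by linear_combination hh01P
    rw [h0, mul_zero] at h1
    rcases mul_eq_zero.mp h1 with h2 | h2
    · exact hN3 (by rw [h2, mul_zero])
    · exact hgp1 h2
  have hbfg1 : b ^ 2 * f + g + 1 ≠ 0 := by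
    intro h0
    have h1 : (b ^ 2 * h01v + a ^ 2) * (g + 1) = a ^ 2 * (b ^ 2 * f + g + 1) := by
      linear_combination b ^ 2 * hh01P
    rw [h0, mul_zero] at h1
    rcases mul_eq_zero.mp h1 with h2 | h2
    · exact (mul_ne_zero_iff.mp hD3).2 h2
    · exact hgp1 h2
  have hfp1 : f + 1 ≠ 0 := by
    intro h0
    have h1 := hg10P
    rw [h0, mul_zero] at h1
    exact mul_ne_zero hg10 (mul_ne_zero (mul_ne_zero (pow_ne_zero 2 ha1) hf) hg) h1
  have hq : b ^ 2 * (f + 1) + a1 ^ 2 * f * g ≠ 0 := by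
    intro h0
    have h1 : (g10 + 1) * (a1 ^ 2 * f * g) = b ^ 2 * (f + 1) + a1 ^ 2 * f * g := by
      linear_combination hg10P
    rw [h0] at h1
    rcases mul_eq_zero.mp h1 with h2 | h2
    · exact hG10p1 h2
    · exact mul_ne_zero (mul_ne_zero (pow_ne_zero 2 ha1) hf) hg h2
  have hg01P : g01 * (a^2*f*g*(b^2*f+g+1)) = b^2*(f+g+1)*(g+1) := by
    have pre : (g01 * (a^2*f*g*(b^2*f+g+1))) * ((g*(h01v*(b^2*h01v+a^2))) * (g+1)^2) = (b^2*(f+g+1)*(g+1)) * ((g*(h01v*(b^2*h01v+a^2))) * (g+1)^2) := by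
      linear_combination (a^2*f*g + (3)*a^2*f*g^2 + (3)*a^2*f*g^3 + a^2*f*g^4 + a^2*b^2*f^2*g + (2)*a^2*b^2*f^2*g^2 + a^2*b^2*f^2*g^3) * R3 + (-b^4*g*h01v + (-3)*b^4*g^2*h01v + (-3)*b^4*g^3*h01v - b^4*g^4*h01v - b^4*f*g*h01v + (-2)*b^4*f*g^2*h01v - b^4*f*g^3*h01v - a^2*b^2*g + (-3)*a^2*b^2*g^2 + (-3)*a^2*b^2*g^3 - a^2*b^2*g^4 - a^2*b^4*f*g + (-2)*a^2*b^4*f*g^2 - a^2*b^4*f*g^3) * hh01P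
    exact mul_right_cancel₀ (mul_ne_zero (mul_ne_zero hg hD3) (pow_ne_zero 2 hgp1)) pre
  have hf01P : f01 * (b^2*(f+g+1)) = g*(b^2*f+g+1) := by
    have pre : (f01 * (b^2*(f+g+1))) * ((h01v*g01) * (a^2*f*g*(b^2*f+g+1)) * (g+1)) = (g*(b^2*f+g+1)) * ((h01v*g01) * (a^2*f*g*(b^2*f+g+1)) * (g+1)) := by
      linear_combination (a^2*b^2*f*g + (3)*a^2*b^2*f*g^2 + (3)*a^2*b^2*f*g^3 + a^2*b^2*f*g^4 + a^2*b^2*f^2*g + (2)*a^2*b^2*f^2*g^2 + a^2*b^2*f^2*g^3 + a^2*b^4*f^2*g + (2)*a^2*b^4*f^2*g^2 + a^2*b^4*f^2*g^3 + a^2*b^4*f^3*g + a^2*b^4*f^3*g^2) * RH1 + (-g*h01v + (-2)*g^2*h01v - g^3*h01v - b^2*f*g*h01v - b^2*f*g^2*h01v) * hg01P + (-b^2*g + (-3)*b^2*g^2 + (-3)*b^2*g^3 - b^2*g^4 - b^2*f*g + (-2)*b^2*f*g^2 - b^2*f*g^3 - b^4*f*g + (-2)*b^4*f*g^2 - b^4*f*g^3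 - b^4*f^2*g - b^4*f^2*g^2) * hh01P
    exact mul_right_cancel₀ (mul_ne_zero (mul_ne_zero (mul_ne_zero hh01 hg01) (mul_ne_zero (mul_ne_zero (mul_ne_zero (pow_ne_zero 2 ha) hf) hg) hbfg1)) hgp1) pre
  have hf10P : f10 * (a1^2*b^2*f*(f+1)) = b^2*(f+1)+a1^2*f*g := by
    have pre : (f10 * (a1^2*b^2*f*(f+1))) * ((f*(a1^2*g10)) * (a1^2*f*g)) = (b^2*(f+1)+a1^2*f*g) * ((f*(a1^2*g10)) * (a1^2*f*g)) := by
      linear_combination (a1^4*b^2*f^2*g + a1^4*b^2*f^3*g) * R1 + (-a1^4*f^2*g) * hg10P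
    exact mul_right_cancel₀ (mul_ne_zero (mul_ne_zero hf (mul_ne_zero (pow_ne_zero 2 ha1) hg10)) (mul_ne_zero (mul_ne_zero (pow_ne_zero 2 ha1) hf) hg)) pre
  have hh10P : h10v * (b^2*(f+1)+a1^2*f*g) = a1^4*f^2*g := by
    have pre : (h10v * (b^2*(f+1)+a1^2*f*g)) * ((f10*g10) * (a1^2*b^2*f*(f+1)) * (a1^2*f*g)) = (a1^4*f^2*g) * ((f10*g10) * (a1^2*b^2*f*(f+1)) * (a1^2*f*g)) := by
      linear_combination (a1^4*b^4*f^2*g + (2)*a1^4*b^4*f^3*g + a1^4*b^4*f^4*g + a1^6*b^2*f^3*g^2 + a1^6*b^2*f^4*g^2) * RH2 + (-a1^6*f^3*g^2*g10) * hf10P + (-a1^4*b^2*f^2*g - a1^4*b^2*f^3*g - a1^6*f^3*g^2) * hg10P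
    exact mul_right_cancel₀ (mul_ne_zero (mul_ne_zero (mul_ne_zero hf10 hg10) (mul_ne_zero (mul_ne_zero (mul_ne_zero (pow_ne_zero 2 ha1) (pow_ne_zero 2 hb)) hf) hfp1)) (mul_ne_zero (mul_ne_zero (pow_ne_zero 2 ha1) hf) hg)) pre
  have hh11P : h11v * (b^2*(f+1)) = a1^2*g := by
    have pre : (h11v * (b^2*(f+1))) * ((h10v*(g10*(g10+1))) * (b^2*(f+1)+a1^2*f*g) * (a1^2*f*g)^2) = (a1^2*g) * ((h10v*(g10*(g10+1))) * (b^2*(f+1)+a1^2*f*g) * (a1^2*f*g)^2) := by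
      linear_combination (a1^4*b^4*f^2*g^2 + (2)*a1^4*b^4*f^3*g^2 + a1^4*b^4*f^4*g^2 + a1^6*b^2*f^3*g^3 + a1^6*b^2*f^4*g^3) * R6 + (-a1^6*f^2*g^3*g10 - a1^6*f^2*g^3*g10^2) * hh10P + (-a1^6*b^2*f^2*g^2 - a1^6*b^2*f^3*g^2 - a1^8*f^3*g^3 - a1^8*f^3*g^3*g10) * hg10P
    exact mul_right_cancel₀ (mul_ne_zero (mul_ne_zero (mul_ne_zero hh10 (mul_ne_zero hg10 hG10p1)) hq) (pow_ne_zero 2 (mul_ne_zero (mul_ne_zero (pow_ne_zero 2 ha1) hf) hg))) pre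
  have hbf1g : b ^ 2 * (f + 1) + g ≠ 0 := by
    intro h0
    have h1 : (h11v + a1 ^ 2) * (b ^ 2 * (f + 1)) = a1 ^ 2 * (b ^ 2 * (f + 1) + g) := by
      linear_combination hh11P
    rw [h0, mul_zero] at h1
    rcases mul_eq_zero.mp h1 with h2 | h2
    · exact hN5 (by rw [h2, mul_zero])
    · exact mul_ne_zero (pow_ne_zero 2 hb) hfp1 h2
  have hg11P : g11 * (f+g+1) = f*(b^2*(f+1)+g) := by
    have pre : (g11 * (f+g+1)) * ((g10*(h11v*(b^2*h11v+a1^2))) * (b^2*(f+1))^2 * (a1^2*f*g)) = (f*(b^2*(f+1)+g)) * ((g10*(h11v*(b^2*h11v+a1^2))) * (b^2*(f+1))^2 * (a1^2*f*g)) := by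
      linear_combination (a1^2*b^4*f*g + a1^2*b^4*f*g^2 + (3)*a1^2*b^4*f^2*g + (2)*a1^2*b^4*f^2*g^2 + (3)*a1^2*b^4*f^3*g + a1^2*b^4*f^3*g^2 + a1^2*b^4*f^4*g) * R5 + (a1^2*b^4*f*g + a1^2*b^4*f*g^2 + (2)*a1^2*b^4*f^2*g + a1^2*b^4*f^2*g^2 - a1^2*b^4*f^2*g^2*g10*h11v + a1^2*b^4*f^3*g - a1^2*b^4*f^3*g^2*g10*h11v - a1^2*b^6*f^2*g*g10*h11v + (-2)*a1^2*b^6*f^3*g*g10*h11v - a1^2*b^6*f^4*g*g10*h11v - a1^4*b^2*f^2*g^2*g10 - a1^4*b^2*f^2*g^3*g10 - a1^4*b^2*f^3*g^2*g10 - a1^4*b^4*f^2*g*g10 - a1^4*b^4*f^2*g^2*g10 + (-2)*a1^4*b^4*f^3*g*g10 - a1^4*b^4*f^3*g^2*g10 - a1^4*b^4*f^4*g*g10) * hh11P + (-a1^4*b^2*f*g^2 - a1^4*b^2*f*g^3 - a1^4*b^2*f^2*g^2 - a1^4*b^4*f*g - a1^4*b^4*f*g^2 + (-2)*a1^4*b^4*f^2*g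 - a1^4*b^4*f^2*g^2 - a1^4*b^4*f^3*g) * hg10P
    exact mul_right_cancel₀ (mul_ne_zero (mul_ne_zero (mul_ne_zero hg10 hD5) (pow_ne_zero 2 (mul_ne_zero (pow_ne_zero 2 hb) hfp1))) (mul_ne_zero (mul_ne_zero (pow_ne_zero 2 ha1) hf) hg)) pre
  have hf11P : f11 * (a1^2*f*g*(b^2*(f+1)+g)) = b^2*(f+1)*(f+g+1) := by
    have pre : (f11 * (a1^2*f*g*(b^2*(f+1)+g))) * ((f01*(a1^2*g11)) * (f+g+1) * (b^2*(f+g+1))) = (b^2*(f+1)*(f+g+1)) * ((f01*(a1^2*g11)) * (f+g+1) * (b^2*(f+g+1))) := by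
      linear_combination (a1^2*b^2*f*g^2 + (2)*a1^2*b^2*f*g^3 + a1^2*b^2*f*g^4 + (2)*a1^2*b^2*f^2*g^2 + (2)*a1^2*b^2*f^2*g^3 + a1^2*b^2*f^3*g^2 + a1^2*b^4*f*g + (2)*a1^2*b^4*f*g^2 + a1^2*b^4*f*g^3 + (3)*a1^2*b^4*f^2*g + (4)*a1^2*b^4*f^2*g^2 + a1^2*b^4*f^2*g^3 + (3)*a1^2*b^4*f^3*g + (2)*a1^2*b^4*f^3*g^2 + a1^2*b^4*f^4*g) * R7 + (a1^2*b^2*f*g^2 + a1^2*b^2*f*g^3 + a1^2*b^2*f^2*g^2 - a1^2*b^4*f01 + (-2)*a1^2*b^4*g*f01 - a1^2*b^4*g^2*f01 + (-3)*a1^2*b^4*f*f01 + a1^2*b^4*f*g + (-4)*a1^2*b^4*f*g*f01 + a1^2*b^4*f*g^2 - a1^2*b^4*f*g^2*f01 + (-3)*a1^2*b^4*f^2*f01 + (2)*a1^2*b^4*f^2*g + (-2)*a1^2*b^4*f^2*g*f01 + a1^2*b^4*f^2*g^2 - a1^2*b^4*f^3*f01 + a1^2*b^4*f^3*g) * hg11P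 + (-a1^2*b^2*f*g - a1^2*b^2*f*g^2 + (-2)*a1^2*b^2*f^2*g - a1^2*b^2*f^2*g^2 - a1^2*b^2*f^3*g - a1^2*b^4*f - a1^2*b^4*f*g + (-3)*a1^2*b^4*f^2 + (-2)*a1^2*b^4*f^2*g + (-3)*a1^2*b^4*f^3 - a1^2*b^4*f^3*g - a1^2*b^4*f^4) * hf01P
    exact mul_right_cancel₀ (mul_ne_zero (mul_ne_zero (mul_ne_zero hf01 (mul_ne_zero (pow_ne_zero 2 ha1) hg11)) hfg1) (mul_ne_zero (pow_ne_zero 2 hb) hfg1)) pre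
  have Tfin : f - f11 = s^4*a^2*f*f11*(f01-f10) := by
    have pre : (f - f11) * ((a1^2*f*g*(b^2*(f+1)+g)) * (b^2*(f+g+1)) * (a1^2*b^2*f*(f+1)) * (1:ℂ)^4) = (s^4*a^2*f*f11*(f01-f10)) * ((a1^2*f*g*(b^2*(f+1)+g)) * (b^2*(f+g+1)) * (a1^2*b^2*f*(f+1)) * (1:ℂ)^4) := by
      linear_combination (-a1^2*b^4*f - a1^2*b^4*f*g + (-2)*a1^2*b^4*f^2 - a1^2*b^4*f^2*g - a1^2*b^4*f^3 + a^2*a1^2*b^4*f^2*s^4*f10 - a^2*a1^2*b^4*f^2*s^4*f01 + a^2*a1^2*b^4*f^2*g*s^4*f10 - a^2*a1^2*b^4*f^2*g*s^4*f01 + (2)*a^2*a1^2*b^4*f^3*s^4*f10 + (-2)*a^2*a1^2*b^4*f^3*s^4*f01 + a^2*a1^2*b^4*f^3*g*s^4*f10 - a^2*a1^2*b^4*f^3*g*s^4*f01 + a^2*a1^2*b^4*f^4*s^4*f10 - a^2*a1^2*b^4*f^4*s^4*f01) * hf11P + (-a^2*a1^2*b^4*f^2*s^4 - a^2*a1^2*b^4*f^2*g*s^4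 + (-3)*a^2*a1^2*b^4*f^3*s^4 + (-2)*a^2*a1^2*b^4*f^3*g*s^4 + (-3)*a^2*a1^2*b^4*f^4*s^4 - a^2*a1^2*b^4*f^4*g*s^4 - a^2*a1^2*b^4*f^5*s^4) * hf01P + (a^2*b^4*f*s^4 + (2)*a^2*b^4*f*g*s^4 + a^2*b^4*f*g^2*s^4 + (3)*a^2*b^4*f^2*s^4 + (4)*a^2*b^4*f^2*g*s^4 + a^2*b^4*f^2*g^2*s^4 + (3)*a^2*b^4*f^3*s^4 + (2)*a^2*b^4*f^3*g*s^4 + a^2*b^4*f^4*s^4) * hf10P + (-a1*b^6*f + (-2)*a1*b^6*f*g - a1*b^6*f*g^2 + (-4)*a1*b^6*f^2 + (-6)*a1*b^6*f^2*g + (-2)*a1*b^6*f^2*g^2 + (-6)*a1*b^6*f^3 + (-6)*a1*b^6*f^3*g - a1*b^6*f^3*g^2 + (-4)*a1*b^6*f^4 + (-2)*a1*b^6*f^4*g - a1*b^6*f^5 + a1^3*b^4*f^3*g^2 + a1^3*b^4*f^3*g^3 + (2)*a1^3*b^4*f^4*g^2 + a1^3*b^4*f^4*g^3 + a1^3*b^4*f^5*g^2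 + a1^3*b^6*f^3*g + a1^3*b^6*f^3*g^2 + (3)*a1^3*b^6*f^4*g + (2)*a1^3*b^6*f^4*g^2 + (3)*a1^3*b^6*f^5*g + a1^3*b^6*f^5*g^2 + a1^3*b^6*f^6*g - a*b^6*f*s^2 + (-2)*a*b^6*f*g*s^2 - a*b^6*f*g^2*s^2 + (-4)*a*b^6*f^2*s^2 + (-6)*a*b^6*f^2*g*s^2 + (-2)*a*b^6*f^2*g^2*s^2 + (-6)*a*b^6*f^3*s^2 + (-6)*a*b^6*f^3*g*s^2 - a*b^6*f^3*g^2*s^2 + (-4)*a*b^6*f^4*s^2 + (-2)*a*b^6*f^4*g*s^2 - a*b^6*f^5*s^2 + a*a1^2*b^4*f^3*g^2*s^2 + a*a1^2*b^4*f^3*g^3*s^2 + (2)*a*a1^2*b^4*f^4*g^2*s^2 + a*a1^2*b^4*f^4*g^3*s^2 + a*a1^2*b^4*f^5*g^2*s^2 + a*a1^2*b^6*f^3*g*s^2 + a*a1^2*b^6*f^3*g^2*s^2 + (3)*a*a1^2*b^6*f^4*g*s^2 + (2)*a*a1^2*b^6*f^4*g^2*s^2 + (3)*a*a1^2*b^6*f^5*g*s^2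 + a*a1^2*b^6*f^5*g^2*s^2 + a*a1^2*b^6*f^6*g*s^2) * ra1
    exact mul_right_cancel₀ (mul_ne_zero (mul_ne_zero (mul_ne_zero (mul_ne_zero (mul_ne_zero (mul_ne_zero (pow_ne_zero 2 ha1) hf) hg) hbf1g) (mul_ne_zero (pow_ne_zero 2 hb) hfg1)) (mul_ne_zero (mul_ne_zero (mul_ne_zero (pow_ne_zero 2 ha1) (pow_ne_zero 2 hb)) hf) hfp1)) (pow_ne_zero 4 one_ne_zero)) pre
  -- conclude
  rw [hu11, hu00, hu01, hu10, one_div_one_div, div_div_eq_mul_div, div_one, ra1, ← hs]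
  have hd1 : s * (s ^ 2 * a) * f11 ≠ 0 :=
    mul_ne_zero (mul_ne_zero hs0 (mul_ne_zero (pow_ne_zero 2 hs0) ha)) hf11
  have hd2 : s * a * f ≠ 0 := mul_ne_zero (mul_ne_zero hs0 ha) hf
  rw [mul_one_div, div_sub_div _ _ hd1 hd2, div_eq_iff (mul_ne_zero hd1 hd2)]
  linear_combination (s ^ 3 * a) * Tfin
end

section
/- Let h ≥ 1 be an integer, ε ∈ ℂ*, and γ : ℤ → ℂ with γ(n+2h) = ε·γ(n) for all n. Suppose X : ℤ → ℂ* satisfies X(n+2h)·X(n) = −(1/P(n))·(1/P(n) + γ(n)) for all n, where P(n) = ∏_{k=1}^{2h−1} X(n+k). Then u(l,m) := i/∏_{k=0}^{2h−1} X(l − 2h·m + k) (with i the imaginary unit) satisfies ε·u(l+1,m+1) − u(l,m) = ε/u(l,m+1) − 1/u(l+1,m) for all l,m, and satisfies the periodicity u(l+2h, m+1) = u(l,m). -/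
/-!
Write `Q n = X n ⋯ X (n + 2h - 1)` for the product of a window of `2h` consecutive values and
`P n = X (n + 1) ⋯ X (n + 2h - 1)` for its interior, so that `Q n = X n * P n` and
`Q (n + 1) = P n * X (n + 2h)`. Multiplying the recurrence by `P n ^ 2` turns it into
`X (n + 2h) * X n * P n ^ 2 = -(1 + γ n * P n)`, which, divided by `X n * P n` or by
`P n * X (n + 2h)`, says

  `Q (n + 1) + 1 / Q n = -γ n / X n`  and  `1 / Q (n + 1) + Q n = -γ n / X (n + 2h)`.

With the quasi-periodicity of `γ` these give
`ε * (1 / Q (n + 1) + Q n) = Q (n + 2h + 1) + 1 / Q (n + 2h)`, and this relation is exactly the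
discrete KdV equation for `u (l, m) = i / Q (l - 2h m)`, because `1 / u = -i Q`.
-/

open Finset

section

variable {K : Type*} [Field K]

def blockProd (X : ℤ → K) (N : ℕ) (n : ℤ) : K :=
  ∏ k ∈ range N, X (n + k)

def IsDiscreteKdV (ε : K) (u : ℤ × ℤ → K) : Prop :=
  ∀ l m : ℤ, ε * u (l + 1, m + 1) - u (l, m) = ε / u (l, m + 1) - 1 / u (l + 1, m)

theorem blockProd_ne_zero {X : ℤ → K} (hX : ∀ n, X n ≠ 0) (N : ℕ) (n : ℤ) : blockProd X N n ≠ 0 :=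
  prod_ne_zero_iff.2 fun _ _ => hX _

theorem blockProd_succ (X : ℤ → K) (N : ℕ) (n : ℤ) :
    blockProd X (N + 1) n = blockProd X N n * X (n + N) :=
  prod_range_succ _ _

theorem blockProd_succ' (X : ℤ → K) (N : ℕ) (n : ℤ) :
    blockProd X (N + 1) n = X n * blockProd X N (n + 1) := by
  rw [blockProd, prod_range_succ', mul_comm, blockProd]
  push_cast
  simp only [add_zero, add_right_comm n, add_assoc]

theorem blockProd_succ_add_one (X : ℤ → K) (N : ℕ) (n : ℤ) :
    blockProd X (N + 1) (n + 1) = blockProd X N (n + 1) * X (n + (N + 1 : ℕ)) := by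
  rw [blockProd_succ, add_right_comm, Nat.cast_succ, add_assoc]

section Recurrence

variable {X γ : ℤ → K} {N : ℕ}
  (hX : ∀ n, X n ≠ 0)
  (hXeq : ∀ n, X (n + (N + 1 : ℕ)) * X n
    = -(1 / blockProd X N (n + 1)) * (1 / blockProd X N (n + 1) + γ n))
include hX hXeq

theorem recurrence_mul_sq (n : ℤ) :
    X (n + (N + 1 : ℕ)) * X n * blockProd X N (n + 1) ^ 2
      = -(1 + γ n * blockProd X N (n + 1)) := by
  have := blockProd_ne_zero hX N (n + 1)
  rw [hXeq]
  field_simp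

theorem blockProd_shift_add_inv (n : ℤ) :
    blockProd X (N + 1) (n + 1) + 1 / blockProd X (N + 1) n = -γ n / X n := by
  have := blockProd_ne_zero hX N (n + 1)
  have := hX n
  rw [blockProd_succ_add_one, blockProd_succ' X N n]
  field_simp
  linear_combination recurrence_mul_sq hX hXeq n

theorem inv_blockProd_shift_add (n : ℤ) :
    1 / blockProd X (N + 1) (n + 1) + blockProd X (N + 1) n = -γ n / X (n + (N + 1 : ℕ)) := by
  have := blockProd_ne_zero hX N (n + 1)
  have := hX n
  have := hX (n + (N + 1 : ℕ))
  rw [blockProd_succ_add_one, blockProd_succ' X N n]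
  field_simp
  linear_combination recurrence_mul_sq hX hXeq n

theorem blockProd_quasiPeriodic {ε : K} (hγ : ∀ n, γ (n + (N + 1 : ℕ)) = ε * γ n) (n : ℤ) :
    ε * (1 / blockProd X (N + 1) (n + 1) + blockProd X (N + 1) n)
      = blockProd X (N + 1) (n + (N + 1 : ℕ) + 1) + 1 / blockProd X (N + 1) (n + (N + 1 : ℕ)) := by
  rw [inv_blockProd_shift_add hX hXeq, blockProd_shift_add_inv hX hXeq, hγ]
  ring

end Recurrence

theorem isDiscreteKdV_of_eq_div {c ε : K} {p : ℤ} {w : ℤ → K} {u : ℤ × ℤ → K}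
    (hc : c ^ 2 = -1)
    (hw : ∀ n, ε * (1 / w (n + 1) + w n) = w (n + p + 1) + 1 / w (n + p))
    (hu : ∀ l m, u (l, m) = c / w (l - p * m)) :
    IsDiscreteKdV ε u := by
  intro l m
  have hc_inv : c⁻¹ = -c := inv_eq_of_mul_eq_one_right (by linear_combination -hc)
  obtain ⟨n, rfl⟩ : ∃ n, l = n + p * (m + 1) := ⟨l - p * (m + 1), by ring⟩
  have h₁ : n + p * (m + 1) + 1 - p * (m + 1) = n + 1 := by ring
  have h₂ : n + p * (m + 1) - p * m = n + p := by ring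
  have h₃ : n + p * (m + 1) + 1 - p * m = n + p + 1 := by ring
  rw [hu, hu, hu, hu, h₁, h₂, h₃, add_sub_cancel_right, div_div_eq_mul_div, one_div_div]
  linear_combination c * hw n + (w (n + p + 1) - ε * w n) * hc_inv

end

theorem stmt_5_general (h : ℕ) (hh : 1 ≤ h) (ε : ℂ) (γ : ℤ → ℂ)
    (hγ : ∀ n : ℤ, γ (n + 2 * h) = ε * γ n)
    (X : ℤ → ℂ) (hX : ∀ n : ℤ, X n ≠ 0)
    (hXeq : ∀ n : ℤ,
      X (n + 2 * h) * X n
        = -(1 / ∏ k ∈ Finset.range (2 * h - 1), X (n + k + 1))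
            * (1 / (∏ k ∈ Finset.range (2 * h - 1), X (n + k + 1)) + γ n))
    (u : ℤ × ℤ → ℂ)
    (hu : ∀ l m : ℤ,
      u (l, m) = Complex.I / ∏ k ∈ Finset.range (2 * h), X (l - 2 * h * m + k)) :
    (∀ l m : ℤ,
      ε * u (l + 1, m + 1) - u (l, m) = ε / u (l, m + 1) - 1 / u (l + 1, m)) ∧
    (∀ l m : ℤ, u (l + 2 * h, m + 1) = u (l, m)) := by
  obtain ⟨N, hN⟩ : ∃ N, 2 * h = N + 1 := ⟨2 * h - 1, by omega⟩
  have hp : ((N + 1 : ℕ) : ℤ) = 2 * h := by exact_mod_cast hN.symm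
  have hXeq' : ∀ n, X (n + (N + 1 : ℕ)) * X n
      = -(1 / blockProd X N (n + 1)) * (1 / blockProd X N (n + 1) + γ n) := by
    intro n
    have hP : blockProd X N (n + 1) = ∏ k ∈ range (2 * h - 1), X (n + k + 1) := by
      rw [show 2 * h - 1 = N by omega]
      exact prod_congr rfl fun k _ => congrArg X (add_right_comm n 1 k)
    rw [hp, hP]
    exact hXeq n
  have hγ' : ∀ n, γ (n + (N + 1 : ℕ)) = ε * γ n := by rw [hp]; exact hγ
  refine ⟨isDiscreteKdV_of_eq_div (p := 2 * h) (w := blockProd X (2 * h)) Complex.I_sq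
    (fun n => ?_) hu, fun l m => ?_⟩
  · have := blockProd_quasiPeriodic hX hXeq' hγ' n
    rwa [hp, ← hN] at this
  · rw [hu, hu, show l + 2 * h - 2 * h * (m + 1) = l - 2 * h * m by ring]

theorem stmt_5 (h : ℕ) (hh : 1 ≤ h) (ε : ℂ) (hε : ε ≠ 0) (γ : ℤ → ℂ)
    (hγ : ∀ n : ℤ, γ (n + 2 * h) = ε * γ n)
    (X : ℤ → ℂ) (hX : ∀ n : ℤ, X n ≠ 0)
    (hXeq : ∀ n : ℤ,
      X (n + 2 * h) * X n
        = -(1 / ∏ k ∈ Finset.range (2 * h - 1), X (n + k + 1))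
            * (1 / (∏ k ∈ Finset.range (2 * h - 1), X (n + k + 1)) + γ n))
    (u : ℤ × ℤ → ℂ)
    (hu : ∀ l m : ℤ,
      u (l, m) = Complex.I / ∏ k ∈ Finset.range (2 * h), X (l - 2 * h * m + k)) :
    (∀ l m : ℤ,
      ε * u (l + 1, m + 1) - u (l, m) = ε / u (l, m + 1) - 1 / u (l + 1, m)) ∧
    (∀ l m : ℤ, u (l + 2 * h, m + 1) = u (l, m)) :=
  stmt_5_general h hh ε γ hγ X hX hXeq u hu
end

section
/- Let h ≥ 1 be an integer, ε ∈ ℂ*, and γ : ℤ → ℂ with γ(n+2h+1) = ε·γ(n) for all n. Suppose X, Y : ℤ → ℂ* satisfy Y(n+1)·Y(n) = X(n) and X(n+2h)·X(n) = −(1/∏_{k=1}^{h−1} X(n+2k))·(1/∏_{k=0}^{h−1} X(n+2k+1) + γ(n)) for all n. Then u(l,m) := i/((∏_{k=1}^{h} X(l − (2h+1)m + 2k − 1))·Y(l − (2h+1)m)) satisfies ε·u(l+1,m+1) − u(l,m) = ε/u(l,m+1) − 1/u(l+1,m) for all l,m, and satisfies u(l+2h+1, m+1) = u(l,m). -/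
/-!
Write `P n = ∏_{k<h} X(n+2k+1)`, `N = 2h+1` and `W n = P n * Y n`, so that `u(l,m) = i / W(l - N m)`
and periodicity is immediate. The `X`-equation reads `1 + W n * W (n+1) = -γ n * P n`, and
telescoping `X n = Y (n+1) * Y n` gives `P n * Y (n+N) = P (n+1) * Y (n+1)`. With
`γ (n+N) = ε γ n` these yield `ε (W n + 1 / W (n+1)) = W (n+N+1) + 1 / W (n+N)`, which is the
discrete KdV equation after the substitution `u = i / W`.
-/

open Finset

section

variable {K : Type*} [Field K]

def oddShiftProd (h : ℕ) (X : ℤ → K) (n : ℤ) : K :=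
  ∏ k ∈ range h, X (n + 2 * k + 1)

lemma oddShiftProd_ne_zero {h : ℕ} {X : ℤ → K} (hX : ∀ n, X n ≠ 0) (n : ℤ) :
    oddShiftProd h X n ≠ 0 :=
  prod_ne_zero_iff.mpr fun _ _ => hX _

lemma oddShiftProd_mul_shift {h : ℕ} {X Y : ℤ → K} (hXY : ∀ n, Y (n + 1) * Y n = X n) (n : ℤ) :
    oddShiftProd h X n * Y (n + (2 * h + 1)) = oddShiftProd h X (n + 1) * Y (n + 1) := by
  have telescope : (∏ k ∈ range h, Y (n + 2 * k + 1)) * Y (n + (2 * h + 1))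
      = Y (n + 1) * ∏ k ∈ range h, Y (n + 1 + 2 * k + 1 + 1) := by
    have := (prod_range_succ (fun k : ℕ => Y (n + 2 * k + 1)) h).symm.trans
      (prod_range_succ' (fun k : ℕ => Y (n + 2 * k + 1)) h)
    rw [mul_comm (Y (n + 1))]
    convert this using 3 <;> push_cast <;> ring_nf
  have reindex : ∏ k ∈ range h, Y (n + 1 + 2 * k + 1) = ∏ k ∈ range h, Y (n + 2 * k + 1 + 1) :=
    prod_congr rfl fun _ _ => by ring_nf
  simp only [oddShiftProd, ← hXY, prod_mul_distrib]
  rw [reindex, mul_assoc, telescope]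
  ring

lemma one_add_mul_oddShiftProd {h : ℕ} (hh : 1 ≤ h) {X Y γ : ℤ → K} (hX : ∀ n, X n ≠ 0)
    (hXY : ∀ n, Y (n + 1) * Y n = X n)
    (hXeq : ∀ n : ℤ,
      X (n + 2 * h) * X n
        = -(1 / ∏ k ∈ range (h - 1), X (n + 2 * (k + 1)))
            * (1 / (∏ k ∈ range h, X (n + 2 * k + 1)) + γ n)) (n : ℤ) :
    1 + oddShiftProd h X n * Y n * (oddShiftProd h X (n + 1) * Y (n + 1))
      = -(γ n * oddShiftProd h X n) := by
  obtain ⟨h, rfl⟩ : ∃ h', h = h' + 1 := ⟨h - 1, by omega⟩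
  have eq_n := hXeq n
  rw [Nat.add_sub_cancel, ← oddShiftProd, ← hXY n] at eq_n
  set Q := ∏ k ∈ range h, X (n + 2 * (k + 1))
  have succ_eq : oddShiftProd (h + 1) X (n + 1) = Q * X (n + 2 * (h + 1 : ℕ)) := by
    rw [oddShiftProd, prod_range_succ]
    congr 1
    · exact prod_congr rfl fun _ _ => by ring_nf
    · push_cast; ring_nf
  rw [succ_eq]
  field_simp [oddShiftProd_ne_zero (h := h + 1) hX n,
    show Q ≠ 0 from prod_ne_zero_iff.mpr fun _ _ => hX _] at eq_n
  linear_combination eq_n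

lemma mul_add_inv_eq_of_shift {P Y γ : ℤ → K} {N : ℤ} {ε : K} (hP : ∀ n, P n ≠ 0)
    (hY : ∀ n, Y n ≠ 0) (hγ : ∀ n, γ (n + N) = ε * γ n)
    (hPY : ∀ n, 1 + P n * Y n * (P (n + 1) * Y (n + 1)) = -(γ n * P n))
    (hshift : ∀ n, P n * Y (n + N) = P (n + 1) * Y (n + 1)) (n : ℤ) :
    ε * (P n * Y n + 1 / (P (n + 1) * Y (n + 1)))
      = P (n + N + 1) * Y (n + N + 1) + 1 / (P (n + N) * Y (n + N)) := by
  have h1 := hPY n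
  have h2 := hPY (n + N)
  have h3 := hshift n
  rw [hγ] at h2
  field_simp [hP n, hP (n + 1), hP (n + N), hY (n + 1), hY (n + N)]
  linear_combination ε * P (n + N) * Y (n + N) * h1 - P (n + 1) * Y (n + 1) * h2
    - ε * γ n * P (n + N) * h3

end

lemma dKdV_of_mul_add_inv_eq {W : ℤ → ℂ} {N : ℤ} {ε : ℂ}
    (hW : ∀ n, ε * (W n + 1 / W (n + 1)) = W (n + N + 1) + 1 / W (n + N))
    {u : ℤ × ℤ → ℂ} (hu : ∀ l m, u (l, m) = Complex.I / W (l - N * m)) (l m : ℤ) :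
    ε * u (l + 1, m + 1) - u (l, m) = ε / u (l, m + 1) - 1 / u (l + 1, m) := by
  have := hW (l - N * (m + 1))
  rw [show l - N * (m + 1) + N = l - N * m by ring,
    show l - N * (m + 1) + 1 = l + 1 - N * (m + 1) by ring,
    show l - N * m + 1 = l + 1 - N * m by ring] at this
  simp only [hu, div_eq_mul_inv, mul_inv, inv_inv, Complex.inv_I]
  linear_combination Complex.I * this

theorem stmt_6_general (h : ℕ) (hh : 1 ≤ h) (ε : ℂ) (γ : ℤ → ℂ)
    (hγ : ∀ n : ℤ, γ (n + (2 * h + 1)) = ε * γ n)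
    (X Y : ℤ → ℂ) (hX : ∀ n : ℤ, X n ≠ 0) (hY : ∀ n : ℤ, Y n ≠ 0)
    (hXY : ∀ n : ℤ, Y (n + 1) * Y n = X n)
    (hXeq : ∀ n : ℤ,
      X (n + 2 * h) * X n
        = -(1 / ∏ k ∈ Finset.range (h - 1), X (n + 2 * (k + 1)))
            * (1 / (∏ k ∈ Finset.range h, X (n + 2 * k + 1)) + γ n))
    (u : ℤ × ℤ → ℂ)
    (hu : ∀ l m : ℤ,
      u (l, m) = Complex.I /
        ((∏ k ∈ Finset.range h, X (l - (2 * h + 1) * m + 2 * (k + 1) - 1))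
          * Y (l - (2 * h + 1) * m))) :
    (∀ l m : ℤ,
      ε * u (l + 1, m + 1) - u (l, m) = ε / u (l, m + 1) - 1 / u (l + 1, m)) ∧
    (∀ l m : ℤ, u (l + (2 * h + 1), m + 1) = u (l, m)) := by
  set W : ℤ → ℂ := fun n => oddShiftProd h X n * Y n
  have hW := mul_add_inv_eq_of_shift (oddShiftProd_ne_zero hX) hY hγ
    (one_add_mul_oddShiftProd hh hX hXY hXeq) (oddShiftProd_mul_shift hXY)
  have hu' : ∀ l m, u (l, m) = Complex.I / W (l - (2 * h + 1) * m) := fun l m => by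
    rw [hu]
    simp only [W, oddShiftProd]
    congr 2
    exact prod_congr rfl fun _ _ => by ring_nf
  refine ⟨dKdV_of_mul_add_inv_eq hW hu', fun l m => ?_⟩
  rw [hu', hu']
  congr 2
  ring

theorem stmt_6 (h : ℕ) (hh : 1 ≤ h) (ε : ℂ) (hε : ε ≠ 0) (γ : ℤ → ℂ)
    (hγ : ∀ n : ℤ, γ (n + (2 * h + 1)) = ε * γ n)
    (X Y : ℤ → ℂ) (hX : ∀ n : ℤ, X n ≠ 0) (hY : ∀ n : ℤ, Y n ≠ 0)
    (hXY : ∀ n : ℤ, Y (n + 1) * Y n = X n)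
    (hXeq : ∀ n : ℤ,
      X (n + 2 * h) * X n
        = -(1 / ∏ k ∈ Finset.range (h - 1), X (n + 2 * (k + 1)))
            * (1 / (∏ k ∈ Finset.range h, X (n + 2 * k + 1)) + γ n))
    (u : ℤ × ℤ → ℂ)
    (hu : ∀ l m : ℤ,
      u (l, m) = Complex.I /
        ((∏ k ∈ Finset.range h, X (l - (2 * h + 1) * m + 2 * (k + 1) - 1))
          * Y (l - (2 * h + 1) * m))) :
    (∀ l m : ℤ,
      ε * u (l + 1, m + 1) - u (l, m) = ε / u (l, m + 1) - 1 / u (l + 1, m)) ∧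
    (∀ l m : ℤ, u (l + (2 * h + 1), m + 1) = u (l, m)) :=
  stmt_6_general h hh ε γ hγ X Y hX hY hXY hXeq u hu
end

section
/- Let h ≥ 1, ε ∈ ℂ*, γ : ℤ → ℂ with γ(n+2h+1) = ε·γ(n), and let X, Y : ℤ → ℂ* satisfy Y(n+1)·Y(n) = X(n) and X(n+2h)·X(n) = −(1/∏_{k=1}^{h−1} X(n+2k))·(1/∏_{k=0}^{h−1} X(n+2k+1) + γ(n)) for all n. Then Y satisfies Y(n+2h+1)·Y(n) = −(1/∏_{k=1}^{2h} Y(n+k))·(1/∏_{k=1}^{2h} Y(n+k) + γ(n)) for all n. -/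
theorem stmt_7 (h : ℕ) (hh : 1 ≤ h) (ε : ℂ) (hε : ε ≠ 0) (γ : ℤ → ℂ)
    (hγ : ∀ n : ℤ, γ (n + (2 * h + 1)) = ε * γ n)
    (X Y : ℤ → ℂ) (hX : ∀ n : ℤ, X n ≠ 0) (hY : ∀ n : ℤ, Y n ≠ 0)
    (hXY : ∀ n : ℤ, Y (n + 1) * Y n = X n)
    (hXeq : ∀ n : ℤ,
      X (n + 2 * h) * X n
        = -(1 / ∏ k ∈ Finset.range (h - 1), X (n + 2 * (k + 1)))
            * (1 / (∏ k ∈ Finset.range h, X (n + 2 * k + 1)) + γ n)) :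
    ∀ n : ℤ,
      Y (n + (2 * h + 1)) * Y n
        = -(1 / ∏ k ∈ Finset.range (2 * h), Y (n + (k + 1)))
            * (1 / (∏ k ∈ Finset.range (2 * h), Y (n + (k + 1))) + γ n) := by
  have A : ∀ m : ℕ, ∀ n : ℤ,
      ∏ k ∈ Finset.range (2 * m), Y (n + (k + 1))
        = ∏ k ∈ Finset.range m, X (n + 2 * k + 1) := by
    intro m
    induction m with
    | zero => simp
    | succ m ih =>
      intro n
      rw [show 2 * (m + 1) = 2 * m + 1 + 1 by ring, Finset.prod_range_succ,
        Finset.prod_range_succ, Finset.prod_range_succ, ih]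
      have e := hXY (n + 2 * m + 1)
      push_cast
      rw [show n + (2 * (m : ℤ) + 1 + 1) = n + 2 * m + 1 + 1 by ring,
        show n + (2 * (m : ℤ) + 1) = n + 2 * m + 1 by ring]
      linear_combination (∏ k ∈ Finset.range m, X (n + 2 * (k : ℤ) + 1)) * e
  have B : ∀ m : ℕ, ∀ n : ℤ,
      Y (n + (2 * m + 1)) * Y n * ∏ k ∈ Finset.range m, X (n + 2 * k + 1)
        = ∏ k ∈ Finset.range (m + 1), X (n + 2 * k) := by
    intro m
    induction m with
    | zero => intro n; simpa using hXY n
    | succ m ih =>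
      intro n
      rw [Finset.prod_range_succ, Finset.prod_range_succ (f := fun k => X (n + 2 * k)),
        ← ih n]
      have e1 := hXY (n + 2 * m + 2)
      have e2 := hXY (n + 2 * m + 1)
      rw [show n + 2 * (m : ℤ) + 1 + 1 = n + 2 * m + 2 by ring] at e2
      have e3 : Y (n + 2 * m + 2 + 1) * X (n + 2 * m + 1)
          = X (n + 2 * m + 2) * Y (n + 2 * m + 1) := by
        rw [← e2, ← e1]; ring
      push_cast
      rw [show n + (2 * ((m : ℤ) + 1) + 1) = n + 2 * m + 2 + 1 by ring,
        show n + 2 * ((m : ℤ) + 1) = n + 2 * m + 2 by ring,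
        show n + (2 * (m : ℤ) + 1) = n + 2 * m + 1 by ring]
      linear_combination (Y n * ∏ k ∈ Finset.range m, X (n + 2 * (k : ℤ) + 1)) * e3
  intro n
  have hQ : (∏ k ∈ Finset.range h, X (n + 2 * (k : ℤ) + 1)) ≠ 0 :=
    Finset.prod_ne_zero_iff.mpr fun k _ => hX _
  have hP : (∏ k ∈ Finset.range (h - 1), X (n + 2 * ((k : ℤ) + 1))) ≠ 0 :=
    Finset.prod_ne_zero_iff.mpr fun k _ => hX _
  rw [A h n]
  have hB := B h n
  -- split the X-product
  have hsplit : ∏ k ∈ Finset.range (h + 1), X (n + 2 * (k : ℤ))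
      = X n * (∏ k ∈ Finset.range (h - 1), X (n + 2 * ((k : ℤ) + 1))) * X (n + 2 * h) := by
    obtain ⟨m, rfl⟩ := Nat.exists_eq_add_of_le hh
    simp only [Nat.add_sub_cancel_left]
    rw [show 1 + m + 1 = m + 1 + 1 by ring, Finset.prod_range_succ, Finset.prod_range_succ']
    push_cast
    rw [show n + (0 : ℤ) = n by ring,
      show n + 2 * ((m : ℤ) + 1) = n + 2 * (1 + (m : ℤ)) by ring]
    ring
  rw [hsplit] at hB
  have he := hXeq n
  set Q := ∏ k ∈ Finset.range h, X (n + 2 * (k : ℤ) + 1) with hQdef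
  set P := ∏ k ∈ Finset.range (h - 1), X (n + 2 * ((k : ℤ) + 1)) with hPdef
  have key : Y (n + (2 * h + 1)) * Y n * Q = -(1 / Q + γ n) := by
    rw [hB, show X n * P * X (n + 2 * h) = X (n + 2 * h) * X n * P by ring, he]
    field_simp
  field_simp at key ⊢
  linear_combination key
end

section
/- Let ε, α₀, β₀ ∈ ℂ* and set α(l) = ε^l·α₀, β(m) = ε^m·β₀ (Lemma A₆ setting). Suppose F, G : ℤ × ℤ → ℂ* satisfy the l-direction q-Painlevé II system F(l+1,m)·F(l,m) = (G(l+1,m)+1)/(α(l+1)²·G(l+1,m)) and G(l+1,m)·G(l,m) = β(m)²·(F(l,m)+1)/(α(l+1)²·F(l,m)), and additionally H defined by H(l,m) = 1/(F(l,m)·G(l,m)) satisfies the m-direction system G(l,m+1)·G(l,m) = β(m)²·(H(l,m+1)+α(l)²)/(H(l,m+1)·(β(m)²·H(l,m+1)+α(l)²)) and H(l,m+1)·H(l,m) = α(l)²/(G(l,m)·(G(l,m)+1)). Then for all l,m, the values F(l,m) and G(l,m) are uniquely determined by F(0,0), G(0,0), α₀, β₀, ε; in particular, computing F(l,m) by first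 iterating in the l-direction and then the m-direction gives the same result as first iterating in the m-direction and then the l-direction. -/
/-!
Both flows are triangular recurrences that can be solved for the next point and also for the
previous one: in `F(l+1,m) F(l,m) = A(G(l+1,m))`, `G(l+1,m) G(l,m) = B(F(l,m))` one reads off
`G(l+1,m)` and then `F(l+1,m)` from `(F, G)(l,m)`, and conversely. The same holds for the
pair `(G, H)` in the `m`-direction, and `(G, H)` determines `(F, G)` because `H = 1/(F G)`.
Hence agreement of two solutions propagates from `(0,0)` along the column `l = 0` and then
along every row.
-/

theorem Prod.mk_eq_mk_iff_of_mul_eq {M : Type*} [MulZeroClass M] [IsCancelMulZero M] {A B : M → M}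
    {x₀ y₀ x₁ y₁ x₀' y₀' x₁' y₁' : M}
    (hx : x₁ * x₀ = A y₁) (hy : y₁ * y₀ = B x₀)
    (hx' : x₁' * x₀' = A y₁') (hy' : y₁' * y₀' = B x₀')
    (hx₀' : x₀' ≠ 0) (hy₀' : y₀' ≠ 0) (hx₁' : x₁' ≠ 0) (hy₁' : y₁' ≠ 0) :
    (x₀, y₀) = (x₀', y₀') ↔ (x₁, y₁) = (x₁', y₁') := by
  simp only [Prod.mk.injEq]
  constructor
  · rintro ⟨rfl, rfl⟩
    have hy₁ : y₁ = y₁' := mul_right_cancel₀ hy₀' (by rw [hy, hy'])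
    exact ⟨mul_right_cancel₀ hx₀' (by rw [hx, hx', hy₁]), hy₁⟩
  · rintro ⟨rfl, rfl⟩
    have hx₀ : x₀ = x₀' := mul_left_cancel₀ hx₁' (by rw [hx, hx'])
    exact ⟨hx₀, mul_left_cancel₀ hy₁' (by rw [hy, hy', hx₀])⟩

theorem Prod.mk_one_div_mul_eq_iff {K : Type*} [DivisionRing K] {f g f' g' : K} (hg' : g' ≠ 0) :
    (g, 1 / (f * g)) = (g', 1 / (f' * g')) ↔ (f, g) = (f', g') := by
  simp only [Prod.mk.injEq, one_div, inv_inj]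
  constructor
  · rintro ⟨rfl, h⟩
    exact ⟨mul_right_cancel₀ hg' h, rfl⟩
  · rintro ⟨rfl, rfl⟩
    exact ⟨rfl, rfl⟩

theorem Int.forall_of_iff_add_one {P : ℤ → Prop} (h : ∀ n, P n ↔ P (n + 1)) (h₀ : P 0) (n : ℤ) :
    P n :=
  (Succ.rec_linear (fun n => by rw [Order.succ_eq_add_one]; exact h n) 0 n).mp h₀

theorem Int.forall_prod_of_iff_add_one {P : ℤ × ℤ → Prop} (hl : ∀ l m, P (l, m) ↔ P (l + 1, m))
    (hm : ∀ m, P (0, m) ↔ P (0, m + 1)) (h₀ : P (0, 0)) (l m : ℤ) : P (l, m) :=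
  Int.forall_of_iff_add_one (P := fun l => P (l, m)) (hl · m)
    (Int.forall_of_iff_add_one (P := fun m => P (0, m)) hm h₀ m) l

theorem stmt_8_general
    (α β : ℤ → ℂ)
    (F G F' G' : ℤ × ℤ → ℂ)
    (hF' : ∀ l m : ℤ, F' (l, m) ≠ 0) (hG' : ∀ l m : ℤ, G' (l, m) ≠ 0)
    (hl1 : ∀ l m : ℤ,
      F (l + 1, m) * F (l, m) = (G (l + 1, m) + 1) / ((α (l + 1)) ^ 2 * G (l + 1, m)))
    (hl2 : ∀ l m : ℤ,
      G (l + 1, m) * G (l, m) = (β m) ^ 2 * (F (l, m) + 1) / ((α (l + 1)) ^ 2 * F (l, m)))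
    (hm1 : ∀ l m : ℤ,
      G (l, m + 1) * G (l, m)
        = (β m) ^ 2 * (1 / (F (l, m + 1) * G (l, m + 1)) + (α l) ^ 2)
          / ((1 / (F (l, m + 1) * G (l, m + 1)))
              * ((β m) ^ 2 * (1 / (F (l, m + 1) * G (l, m + 1))) + (α l) ^ 2)))
    (hm2 : ∀ l m : ℤ,
      (1 / (F (l, m + 1) * G (l, m + 1))) * (1 / (F (l, m) * G (l, m)))
        = (α l) ^ 2 / (G (l, m) * (G (l, m) + 1)))
    (hl1' : ∀ l m : ℤ,
      F' (l + 1, m) * F' (l, m) = (G' (l + 1, m) + 1) / ((α (l + 1)) ^ 2 * G' (l + 1, m)))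
    (hl2' : ∀ l m : ℤ,
      G' (l + 1, m) * G' (l, m) = (β m) ^ 2 * (F' (l, m) + 1) / ((α (l + 1)) ^ 2 * F' (l, m)))
    (hm1' : ∀ l m : ℤ,
      G' (l, m + 1) * G' (l, m)
        = (β m) ^ 2 * (1 / (F' (l, m + 1) * G' (l, m + 1)) + (α l) ^ 2)
          / ((1 / (F' (l, m + 1) * G' (l, m + 1)))
              * ((β m) ^ 2 * (1 / (F' (l, m + 1) * G' (l, m + 1))) + (α l) ^ 2)))
    (hm2' : ∀ l m : ℤ,
      (1 / (F' (l, m + 1) * G' (l, m + 1))) * (1 / (F' (l, m) * G' (l, m)))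
        = (α l) ^ 2 / (G' (l, m) * (G' (l, m) + 1)))
    (hF0 : F (0, 0) = F' (0, 0)) (hG0 : G (0, 0) = G' (0, 0)) :
    ∀ l m : ℤ, F (l, m) = F' (l, m) ∧ G (l, m) = G' (l, m) := by
  have hH' : ∀ l m, 1 / (F' (l, m) * G' (l, m)) ≠ 0 := fun l m =>
    one_div_ne_zero (mul_ne_zero (hF' l m) (hG' l m))
  have row_step : ∀ l m, (F (l, m), G (l, m)) = (F' (l, m), G' (l, m)) ↔
      (F (l + 1, m), G (l + 1, m)) = (F' (l + 1, m), G' (l + 1, m)) := fun l m =>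
    Prod.mk_eq_mk_iff_of_mul_eq (A := fun g => (g + 1) / (α (l + 1) ^ 2 * g))
      (B := fun f => β m ^ 2 * (f + 1) / (α (l + 1) ^ 2 * f))
      (hl1 l m) (hl2 l m) (hl1' l m) (hl2' l m)
      (hF' l m) (hG' l m) (hF' (l + 1) m) (hG' (l + 1) m)
  have column_step : ∀ m, (F (0, m), G (0, m)) = (F' (0, m), G' (0, m)) ↔
      (F (0, m + 1), G (0, m + 1)) = (F' (0, m + 1), G' (0, m + 1)) := fun m => by
    rw [← Prod.mk_one_div_mul_eq_iff (hG' 0 m), ← Prod.mk_one_div_mul_eq_iff (hG' 0 (m + 1))]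
    exact Prod.mk_eq_mk_iff_of_mul_eq
      (A := fun h => β m ^ 2 * (h + α 0 ^ 2) / (h * (β m ^ 2 * h + α 0 ^ 2)))
      (B := fun g => α 0 ^ 2 / (g * (g + 1)))
      (hm1 0 m) (hm2 0 m) (hm1' 0 m) (hm2' 0 m)
      (hG' 0 m) (hH' 0 m) (hG' 0 (m + 1)) (hH' 0 (m + 1))
  intro l m
  simpa only [Prod.mk.injEq] using
    Int.forall_prod_of_iff_add_one (P := fun p => (F p, G p) = (F' p, G' p))
      row_step column_step (by rw [hF0, hG0]) l m

theorem stmt_8 (ε α₀ β₀ : ℂ) (hε : ε ≠ 0) (hα₀ : α₀ ≠ 0) (hβ₀ : β₀ ≠ 0)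
    (α β : ℤ → ℂ) (hα : ∀ l : ℤ, α l = ε ^ l * α₀) (hβ : ∀ m : ℤ, β m = ε ^ m * β₀)
    (F G F' G' : ℤ × ℤ → ℂ)
    (hF : ∀ l m : ℤ, F (l, m) ≠ 0) (hG : ∀ l m : ℤ, G (l, m) ≠ 0)
    (hF' : ∀ l m : ℤ, F' (l, m) ≠ 0) (hG' : ∀ l m : ℤ, G' (l, m) ≠ 0)
    (hden1 : ∀ l m : ℤ, G (l, m) + 1 ≠ 0) (hden1' : ∀ l m : ℤ, G' (l, m) + 1 ≠ 0)
    (hden2 : ∀ l m : ℤ,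
      (β m) ^ 2 * (1 / (F (l, m) * G (l, m))) + (α l) ^ 2 ≠ 0)
    (hden2' : ∀ l m : ℤ,
      (β m) ^ 2 * (1 / (F' (l, m) * G' (l, m))) + (α l) ^ 2 ≠ 0)
    (hl1 : ∀ l m : ℤ,
      F (l + 1, m) * F (l, m) = (G (l + 1, m) + 1) / ((α (l + 1)) ^ 2 * G (l + 1, m)))
    (hl2 : ∀ l m : ℤ,
      G (l + 1, m) * G (l, m) = (β m) ^ 2 * (F (l, m) + 1) / ((α (l + 1)) ^ 2 * F (l, m)))
    (hm1 : ∀ l m : ℤ,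
      G (l, m + 1) * G (l, m)
        = (β m) ^ 2 * (1 / (F (l, m + 1) * G (l, m + 1)) + (α l) ^ 2)
          / ((1 / (F (l, m + 1) * G (l, m + 1)))
              * ((β m) ^ 2 * (1 / (F (l, m + 1) * G (l, m + 1))) + (α l) ^ 2)))
    (hm2 : ∀ l m : ℤ,
      (1 / (F (l, m + 1) * G (l, m + 1))) * (1 / (F (l, m) * G (l, m)))
        = (α l) ^ 2 / (G (l, m) * (G (l, m) + 1)))
    (hl1' : ∀ l m : ℤ,
      F' (l + 1, m) * F' (l, m) = (G' (l + 1, m) + 1) / ((α (l + 1)) ^ 2 * G' (l + 1, m)))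
    (hl2' : ∀ l m : ℤ,
      G' (l + 1, m) * G' (l, m) = (β m) ^ 2 * (F' (l, m) + 1) / ((α (l + 1)) ^ 2 * F' (l, m)))
    (hm1' : ∀ l m : ℤ,
      G' (l, m + 1) * G' (l, m)
        = (β m) ^ 2 * (1 / (F' (l, m + 1) * G' (l, m + 1)) + (α l) ^ 2)
          / ((1 / (F' (l, m + 1) * G' (l, m + 1)))
              * ((β m) ^ 2 * (1 / (F' (l, m + 1) * G' (l, m + 1))) + (α l) ^ 2)))
    (hm2' : ∀ l m : ℤ,
      (1 / (F' (l, m + 1) * G' (l, m + 1))) * (1 / (F' (l, m) * G' (l, m)))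
        = (α l) ^ 2 / (G' (l, m) * (G' (l, m) + 1)))
    (hF0 : F (0, 0) = F' (0, 0)) (hG0 : G (0, 0) = G' (0, 0)) :
    ∀ l m : ℤ, F (l, m) = F' (l, m) ∧ G (l, m) = G' (l, m) :=
  stmt_8_general α β F G F' G' hF' hG' hl1 hl2 hm1 hm2 hl1' hl2' hm1' hm2' hF0 hG0
end

section
/- In Hirota's discrete KdV equation specialized as the case ε = 1, h = 1 of the periodic reduction: let γ : ℤ → ℂ with γ(n+2) = ε·γ(n) and X : ℤ → ℂ* satisfy X(n+2)·X(n) = −(1/X(n+1))·(1/X(n+1) + γ(n)) for all n. Then u(l,m) := i/(X(l−2m)·X(l−2m+1)) satisfies ε·u(l+1,m+1) − u(l,m) = ε/u(l,m+1) − 1/u(l+1,m) and u(l+2,m+1) = u(l,m) for all l,m. -/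
/-!
Write `w n = X n * X (n + 1)`, so that `u (l, m) = i / w (l - 2 m)` depends on `l - 2 m` only;
this gives the periodicity at once and turns the lattice equation into the one-index relation
`ε / w (n - 1) - 1 / w n = w (n + 1) - ε * w (n - 2)`. Multiplied by `X (n + 1) ^ 2`, the q-P_I
recurrence reads `w n * w (n + 1) = -1 - γ n * X (n + 1)`. Clearing denominators in the relation
and using this at `n` and at `n - 2`, the constants cancel and the `γ` terms cancel because
`γ n = ε * γ (n - 2)`.
-/

def adjacentProduct (X : ℤ → ℂ) (n : ℤ) : ℂ := X n * X (n + 1)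

section QPainleveI

variable {ε : ℂ} {γ : ℤ → ℂ} {X : ℤ → ℂ}

theorem adjacentProduct_mul_adjacentProduct_add_one {n : ℤ} (hX : X (n + 1) ≠ 0)
    (hXeq : X (n + 2) * X n = -(1 / X (n + 1)) * (1 / X (n + 1) + γ n)) :
    adjacentProduct X n * adjacentProduct X (n + 1) = -1 - γ n * X (n + 1) := by
  rw [adjacentProduct, adjacentProduct, show n + 1 + 1 = n + 2 by ring]
  field_simp at hXeq
  linear_combination hXeq

theorem adjacentProduct_reduction (hγ : ∀ n, γ (n + 2) = ε * γ n) (hX : ∀ n, X n ≠ 0)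
    (hXeq : ∀ n, X (n + 2) * X n = -(1 / X (n + 1)) * (1 / X (n + 1) + γ n)) (n : ℤ) :
    ε / adjacentProduct X (n - 1) - 1 / adjacentProduct X n =
      adjacentProduct X (n + 1) - ε * adjacentProduct X (n - 2) := by
  have hprev := adjacentProduct_mul_adjacentProduct_add_one (hX (n - 2 + 1)) (hXeq (n - 2))
  have hnext := adjacentProduct_mul_adjacentProduct_add_one (hX (n + 1)) (hXeq n)
  have hγn := hγ (n - 2)
  rw [show n - 2 + 1 = n - 1 by ring] at hprev
  rw [show n - 2 + 2 = n by ring] at hγn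
  have hw : ∀ k, adjacentProduct X k ≠ 0 := fun k => mul_ne_zero (hX k) (hX (k + 1))
  have hw_pred : adjacentProduct X (n - 1) = X (n - 1) * X n := by
    rw [adjacentProduct, sub_add_cancel]
  have hw_self : adjacentProduct X n = X n * X (n + 1) := rfl
  rw [div_sub_div _ _ (hw (n - 1)) (hw n), div_eq_iff (mul_ne_zero (hw (n - 1)) (hw n))]
  linear_combination ε * adjacentProduct X n * hprev - adjacentProduct X (n - 1) * hnext
    + γ n * X (n + 1) * hw_pred - ε * γ (n - 2) * X (n - 1) * hw_self
    + X (n - 1) * X n * X (n + 1) * hγn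

end QPainleveI

-- Since `1 / (i / w) = -i * w`, both sides are `i` times the two sides of `hw` at `n = l - 2 m`.
theorem lattice_eq_of_reduction {ε : ℂ} {w : ℤ → ℂ}
    (hw : ∀ n, ε / w (n - 1) - 1 / w n = w (n + 1) - ε * w (n - 2))
    {u : ℤ × ℤ → ℂ} (hu : ∀ l m : ℤ, u (l, m) = Complex.I / w (l - 2 * m)) (l m : ℤ) :
    ε * u (l + 1, m + 1) - u (l, m) = ε / u (l, m + 1) - 1 / u (l + 1, m) := by
  have h := hw (l - 2 * m)
  rw [hu, hu, hu, hu, show l + 1 - 2 * (m + 1) = l - 2 * m - 1 by ring,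
    show l - 2 * (m + 1) = l - 2 * m - 2 by ring, show l + 1 - 2 * m = l - 2 * m + 1 by ring]
  simp only [div_eq_mul_inv, one_mul, mul_inv, inv_inv, Complex.inv_I] at h ⊢
  linear_combination Complex.I * h

theorem stmt_9_general (ε : ℂ) (γ : ℤ → ℂ)
    (hγ : ∀ n : ℤ, γ (n + 2) = ε * γ n)
    (X : ℤ → ℂ) (hX : ∀ n : ℤ, X n ≠ 0)
    (hXeq : ∀ n : ℤ,
      X (n + 2) * X n = -(1 / X (n + 1)) * (1 / X (n + 1) + γ n))
    (u : ℤ × ℤ → ℂ)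
    (hu : ∀ l m : ℤ, u (l, m) = Complex.I / (X (l - 2 * m) * X (l - 2 * m + 1))) :
    (∀ l m : ℤ,
      ε * u (l + 1, m + 1) - u (l, m) = ε / u (l, m + 1) - 1 / u (l + 1, m)) ∧
    (∀ l m : ℤ, u (l + 2, m + 1) = u (l, m)) := by
  refine ⟨lattice_eq_of_reduction (adjacentProduct_reduction hγ hX hXeq) hu, fun l m => ?_⟩
  rw [hu, hu, show l + 2 - 2 * (m + 1) = l - 2 * m by ring]

theorem stmt_9 (ε : ℂ) (hε : ε ≠ 0) (γ : ℤ → ℂ)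
    (hγ : ∀ n : ℤ, γ (n + 2) = ε * γ n)
    (X : ℤ → ℂ) (hX : ∀ n : ℤ, X n ≠ 0)
    (hXeq : ∀ n : ℤ,
      X (n + 2) * X n = -(1 / X (n + 1)) * (1 / X (n + 1) + γ n))
    (u : ℤ × ℤ → ℂ)
    (hu : ∀ l m : ℤ, u (l, m) = Complex.I / (X (l - 2 * m) * X (l - 2 * m + 1))) :
    (∀ l m : ℤ,
      ε * u (l + 1, m + 1) - u (l, m) = ε / u (l, m + 1) - 1 / u (l + 1, m)) ∧
    (∀ l m : ℤ, u (l + 2, m + 1) = u (l, m)) :=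
  stmt_9_general ε γ hγ X hX hXeq u hu
end

section
/- Let ε ∈ ℂ*, γ : ℤ → ℂ with γ(n+3) = ε·γ(n), and X, Y : ℤ → ℂ* satisfy Y(n+1)·Y(n) = X(n) and X(n+2)·X(n) = −(1/X(n+1) + γ(n)) for all n. Then u(l,m) := i/(X(l−3m+1)·Y(l−3m)) satisfies ε·u(l+1,m+1) − u(l,m) = ε/u(l,m+1) − 1/u(l+1,m) and u(l+3,m+1) = u(l,m) for all l,m. -/
theorem stmt_10 (ε : ℂ) (hε : ε ≠ 0) (γ : ℤ → ℂ)
    (hγ : ∀ n : ℤ, γ (n + 3) = ε * γ n)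
    (X Y : ℤ → ℂ) (hX : ∀ n : ℤ, X n ≠ 0) (hY : ∀ n : ℤ, Y n ≠ 0)
    (hXY : ∀ n : ℤ, Y (n + 1) * Y n = X n)
    (hXeq : ∀ n : ℤ, X (n + 2) * X n = -(1 / X (n + 1) + γ n))
    (u : ℤ × ℤ → ℂ)
    (hu : ∀ l m : ℤ, u (l, m) = Complex.I / (X (l - 3 * m + 1) * Y (l - 3 * m))) :
    (∀ l m : ℤ,
      ε * u (l + 1, m + 1) - u (l, m) = ε / u (l, m + 1) - 1 / u (l + 1, m)) ∧
    (∀ l m : ℤ, u (l + 3, m + 1) = u (l, m)) := by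
  -- key lemma in terms of a single index n
  have key : ∀ n : ℤ,
      ε * (Complex.I / (X (n - 1) * Y (n - 2))) - Complex.I / (X (n + 1) * Y n)
        = ε / (Complex.I / (X (n - 2) * Y (n - 3)))
          - 1 / (Complex.I / (X (n + 2) * Y (n + 1))) := by
    intro n
    -- express X's as products of Y's
    have eXm2 : X (n - 2) = Y (n - 1) * Y (n - 2) := by
      have := hXY (n - 2); rw [show n - 2 + 1 = n - 1 by ring] at this; exact this.symm
    have eXm1 : X (n - 1) = Y n * Y (n - 1) := by
      have := hXY (n - 1); rw [show n - 1 + 1 = n by ring] at this; exact this.symm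
    have eX0 : X n = Y (n + 1) * Y n := (hXY n).symm
    have eX1 : X (n + 1) = Y (n + 2) * Y (n + 1) := by
      have := hXY (n + 1); rw [show n + 1 + 1 = n + 2 by ring] at this; exact this.symm
    have eXm3 : X (n - 3) = Y (n - 2) * Y (n - 3) := by
      have := hXY (n - 3); rw [show n - 3 + 1 = n - 2 by ring] at this; exact this.symm
    -- solve for X (n+2)
    have eX2 : X (n + 2) = -(1 / X (n + 1) + γ n) / X n := by
      rw [← hXeq n, mul_div_cancel_right₀ _ (hX n)]
    -- solve for Y (n-3) using hXeq at n-3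
    have e7 := hXeq (n - 3)
    rw [show n - 3 + 2 = n - 1 by ring, show n - 3 + 1 = n - 2 by ring] at e7
    have eYm3 : Y (n - 3) = -(1 / (Y (n - 1) * Y (n - 2)) + γ (n - 3)) /
        (Y n * Y (n - 1) * Y (n - 2)) := by
      rw [eXm1, eXm3, eXm2] at e7
      have hne : Y n * Y (n - 1) * Y (n - 2) ≠ 0 := by
        simp [hY n, hY (n - 1), hY (n - 2)]
      rw [eq_div_iff hne]
      linear_combination e7
    have eγ : γ n = ε * γ (n - 3) := by
      have := hγ (n - 3); rw [show n - 3 + 3 = n by ring] at this; exact this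
    rw [eX2, eγ, eYm3, eXm1, eXm2, eX1, eX0]
    have i0 : (Complex.I : ℂ) ≠ 0 := Complex.I_ne_zero
    have h2 := hY (n - 2); have h1 := hY (n - 1); have h0 := hY n
    have hp1 := hY (n + 1); have hp2 := hY (n + 2)
    generalize hA : Y (n - 2) = A at *
    generalize hB : Y (n - 1) = B at *
    generalize hC : Y n = C at *
    generalize hD : Y (n + 1) = D at *
    generalize hE : Y (n + 2) = E at *
    simp only [div_div_eq_mul_div, one_div, mul_inv_rev, div_eq_mul_inv, mul_inv, inv_inv, Complex.inv_I]
    have cA : A * A⁻¹ = 1 := mul_inv_cancel₀ h2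
    have cB : B * B⁻¹ = 1 := mul_inv_cancel₀ h1
    have cD : D * D⁻¹ = 1 := mul_inv_cancel₀ hp1
    linear_combination (-(ε * Complex.I * (A⁻¹ * B⁻¹ + γ (n - 3)) * C⁻¹)) * cA
      - (ε * Complex.I * (A⁻¹ * B⁻¹ + γ (n - 3)) * C⁻¹ * A * A⁻¹) * cB
      + (Complex.I * (D⁻¹ * E⁻¹ + ε * γ (n - 3)) * C⁻¹) * cD
  refine ⟨?_, ?_⟩
  · intro l m
    have h1 := hu (l + 1) (m + 1)
    have h2 := hu l m
    have h3 := hu l (m + 1)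
    have h4 := hu (l + 1) m
    rw [show l + 1 - 3 * (m + 1) = l - 3 * m - 2 by ring] at h1
    rw [show l - 3 * (m + 1) = l - 3 * m - 3 by ring] at h3
    rw [show l + 1 - 3 * m = l - 3 * m + 1 by ring] at h4
    rw [h1, h2, h3, h4,
      show l - 3 * m - 2 + 1 = l - 3 * m - 1 by ring,
      show l - 3 * m - 3 + 1 = l - 3 * m - 2 by ring]
    have := key (l - 3 * m)
    rw [show l - 3 * m + 1 + 1 = l - 3 * m + 2 by ring]
    exact this
  · intro l m
    rw [hu, hu, show l + 3 - 3 * (m + 1) = l - 3 * m by ring]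
end

section
/- Let a₀, a₁, b, q ∈ ℂ* with a₀·a₁ = q, and let f₀, f₁, f₂ ∈ ℂ* with f₀·f₁·f₂ = 1. Define s₀ acting by (a₀, a₁, b) ↦ (1/a₀, a₀²·a₁, b/a₀) and (f₀, f₁, f₂) ↦ (f₀·(a₀f₀+f₁+a₀)/(f₀+f₁+1), f₁·(a₀f₀+f₁+1)/(a₀(f₀+f₁+1)), a₀f₂(f₀+f₁+1)²/((a₀f₀+f₁+a₀)(a₀f₀+f₁+1))). Then s₀ is an involution: applying s₀ twice returns (a₀, a₁, b, f₀, f₁, f₂) to its original value, and the transformed variables still satisfy f₀'·f₁'·f₂' = 1 (whenever all denominators are nonzero). -/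
/-- The generator `s₀` of the birational representation of the extended affine Weyl
group of type `(A₁+A₁)⁽¹⁾`, acting on `(a₀, a₁, b, f₀, f₁, f₂)`. -/
noncomputable def dkdvS0 (p : ℂ × ℂ × ℂ × ℂ × ℂ × ℂ) : ℂ × ℂ × ℂ × ℂ × ℂ × ℂ :=
  match p with
  | (a₀, a₁, b, f₀, f₁, f₂) =>
    (a₀⁻¹, a₀ ^ 2 * a₁, b / a₀,
     f₀ * (a₀ * f₀ + f₁ + a₀) / (f₀ + f₁ + 1),
     f₁ * (a₀ * f₀ + f₁ + 1) / (a₀ * (f₀ + f₁ + 1)),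
     a₀ * f₂ * (f₀ + f₁ + 1) ^ 2 / ((a₀ * f₀ + f₁ + a₀) * (a₀ * f₀ + f₁ + 1)))

/-! With `C = f₀ + f₁ + 1`, `A = a₀ f₀ + f₁ + a₀`, `B = a₀ f₀ + f₁ + 1`, the map `s₀` sends
`f₀ ↦ f₀ A / C`, `f₁ ↦ f₁ B / (a₀ C)`, `f₂ ↦ a₀ f₂ C² / (A B)`, and the three factors
`C, A, B` of the denominators are carried to `A B / (a₀ C), B / a₀, A / a₀`. Substituting these
into the second application of `s₀` undoes the first one factor by factor, and the product
`f₀ f₁ f₂` is visibly unchanged. -/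

section

variable {a₀ f₀ f₁ : ℂ}

theorem dkdvS0_f₀_add_f₁_add_one (ha₀ : a₀ ≠ 0) (hC : f₀ + f₁ + 1 ≠ 0) :
    f₀ * (a₀ * f₀ + f₁ + a₀) / (f₀ + f₁ + 1) + f₁ * (a₀ * f₀ + f₁ + 1) / (a₀ * (f₀ + f₁ + 1))
      + 1 = (a₀ * f₀ + f₁ + a₀) * (a₀ * f₀ + f₁ + 1) / (a₀ * (f₀ + f₁ + 1)) := by
  field_simp
  ring

theorem dkdvS0_a₀_mul_f₀_add_f₁_add_a₀ (ha₀ : a₀ ≠ 0) (hC : f₀ + f₁ + 1 ≠ 0) :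
    a₀⁻¹ * (f₀ * (a₀ * f₀ + f₁ + a₀) / (f₀ + f₁ + 1))
      + f₁ * (a₀ * f₀ + f₁ + 1) / (a₀ * (f₀ + f₁ + 1)) + a₀⁻¹ = (a₀ * f₀ + f₁ + 1) / a₀ := by
  field_simp
  ring

theorem dkdvS0_a₀_mul_f₀_add_f₁_add_one (ha₀ : a₀ ≠ 0) (hC : f₀ + f₁ + 1 ≠ 0) :
    a₀⁻¹ * (f₀ * (a₀ * f₀ + f₁ + a₀) / (f₀ + f₁ + 1))
      + f₁ * (a₀ * f₀ + f₁ + 1) / (a₀ * (f₀ + f₁ + 1)) + 1 = (a₀ * f₀ + f₁ + a₀) / a₀ := by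
  field_simp
  ring

end

theorem dkdvS0_dkdvS0 (a₀ a₁ b f₀ f₁ f₂ : ℂ) (ha₀ : a₀ ≠ 0) (hC : f₀ + f₁ + 1 ≠ 0)
    (hA : a₀ * f₀ + f₁ + a₀ ≠ 0) (hB : a₀ * f₀ + f₁ + 1 ≠ 0) :
    dkdvS0 (dkdvS0 (a₀, a₁, b, f₀, f₁, f₂)) = (a₀, a₁, b, f₀, f₁, f₂) := by
  simp only [dkdvS0, Prod.mk.injEq]
  rw [dkdvS0_f₀_add_f₁_add_one ha₀ hC, dkdvS0_a₀_mul_f₀_add_f₁_add_a₀ ha₀ hC,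
    dkdvS0_a₀_mul_f₀_add_f₁_add_one ha₀ hC]
  -- every remaining identity is a cancellation in the free letters `A`, `B`, `C`
  generalize a₀ * f₀ + f₁ + a₀ = A at hA ⊢
  generalize a₀ * f₀ + f₁ + 1 = B at hB ⊢
  generalize f₀ + f₁ + 1 = C at hC ⊢
  refine ⟨inv_inv a₀, ?_, ?_, ?_, ?_, ?_⟩ <;> field_simp

theorem f_prod_of_dkdvS0_eq {a₀ a₁ b f₀ f₁ f₂ a₀' a₁' b' f₀' f₁' f₂' : ℂ} (ha₀ : a₀ ≠ 0)
    (hC : f₀ + f₁ + 1 ≠ 0) (hA : a₀ * f₀ + f₁ + a₀ ≠ 0) (hB : a₀ * f₀ + f₁ + 1 ≠ 0)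
    (h : dkdvS0 (a₀, a₁, b, f₀, f₁, f₂) = (a₀', a₁', b', f₀', f₁', f₂')) :
    f₀' * f₁' * f₂' = f₀ * f₁ * f₂ := by
  simp only [dkdvS0, Prod.mk.injEq] at h
  obtain ⟨-, -, -, rfl, rfl, rfl⟩ := h
  generalize a₀ * f₀ + f₁ + a₀ = A at hA ⊢
  generalize a₀ * f₀ + f₁ + 1 = B at hB ⊢
  generalize f₀ + f₁ + 1 = C at hC ⊢
  field_simp

theorem stmt_11_general (a₀ a₁ b f₀ f₁ f₂ a₀' a₁' b' f₀' f₁' f₂' : ℂ)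
    (ha₀ : a₀ ≠ 0)
    (hfff : f₀ * f₁ * f₂ = 1)
    (h' : dkdvS0 (a₀, a₁, b, f₀, f₁, f₂) = (a₀', a₁', b', f₀', f₁', f₂'))
    (hd1 : f₀ + f₁ + 1 ≠ 0) (hd2 : a₀ * f₀ + f₁ + a₀ ≠ 0) (hd3 : a₀ * f₀ + f₁ + 1 ≠ 0) :
    dkdvS0 (a₀', a₁', b', f₀', f₁', f₂') = (a₀, a₁, b, f₀, f₁, f₂)
      ∧ f₀' * f₁' * f₂' = 1 := by
  rw [← h']
  exact ⟨dkdvS0_dkdvS0 a₀ a₁ b f₀ f₁ f₂ ha₀ hd1 hd2 hd3,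
    (f_prod_of_dkdvS0_eq ha₀ hd1 hd2 hd3 h').trans hfff⟩

theorem stmt_11 (a₀ a₁ b q f₀ f₁ f₂ a₀' a₁' b' f₀' f₁' f₂' : ℂ)
    (ha₀ : a₀ ≠ 0) (ha₁ : a₁ ≠ 0) (hb : b ≠ 0) (hq : q ≠ 0)
    (hf₀ : f₀ ≠ 0) (hf₁ : f₁ ≠ 0) (hf₂ : f₂ ≠ 0)
    (haq : a₀ * a₁ = q) (hfff : f₀ * f₁ * f₂ = 1)
    (h' : dkdvS0 (a₀, a₁, b, f₀, f₁, f₂) = (a₀', a₁', b', f₀', f₁', f₂'))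
    (hd1 : f₀ + f₁ + 1 ≠ 0) (hd2 : a₀ * f₀ + f₁ + a₀ ≠ 0) (hd3 : a₀ * f₀ + f₁ + 1 ≠ 0)
    (hd1' : f₀' + f₁' + 1 ≠ 0) (hd2' : a₀' * f₀' + f₁' + a₀' ≠ 0)
    (hd3' : a₀' * f₀' + f₁' + 1 ≠ 0) :
    dkdvS0 (a₀', a₁', b', f₀', f₁', f₂') = (a₀, a₁, b, f₀, f₁, f₂)
      ∧ f₀' * f₁' * f₂' = 1 :=
  stmt_11_general a₀ a₁ b f₀ f₁ f₂ a₀' a₁' b' f₀' f₁' f₂' ha₀ hfff h' hd1 hd2 hd3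
end

section
/- Let a₀, a₁, a₂, q ∈ ℂ* with a₀·a₁·a₂ = q, c ∈ ℂ*, and f₀, f₁, f₂ ∈ ℂ* with f₀·f₁·f₂ = q·c². For i ∈ ℤ/3ℤ define sᵢ acting by sᵢ(aⱼ) = aⱼ·aᵢ^(−C(i,j)) where C is the Cartan matrix of type A₂⁽¹⁾ (C(i,i)=2, C(i,j)=−1 for i≠j), and sᵢ(f_{i−1}) = f_{i−1}·(1 + aᵢ·fᵢ)/(aᵢ + fᵢ), sᵢ(f_{i+1}) = f_{i+1}·(aᵢ + fᵢ)/(1 + aᵢ·fᵢ), sᵢ(fᵢ) = fᵢ. Then each sᵢ is an involution and preserves both products a₀·a₁·a₂ and f₀·f₁·f₂ (whenever denominators are nonzero). -/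
/-- The Cartan matrix of type `A₂⁽¹⁾`. -/
def cartanA2 (i j : ZMod 3) : ℤ := if i = j then 2 else -1

/-- Action of the generator `sᵢ` on the parameters `a`. -/
noncomputable def sA5a (i : ZMod 3) (a : ZMod 3 → ℂ) : ZMod 3 → ℂ :=
  fun j => a j * a i ^ (-cartanA2 i j)

/-- Action of the generator `sᵢ` on the variables `f`. -/
noncomputable def sA5f (i : ZMod 3) (a f : ZMod 3 → ℂ) : ZMod 3 → ℂ :=
  fun j =>
    if j = i - 1 then f j * (1 + a i * f i) / (a i + f i)
    else if j = i + 1 then f j * (a i + f i) / (1 + a i * f i)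
    else f j

theorem stmt_13 (a f : ZMod 3 → ℂ) (q c : ℂ) (hq : q ≠ 0) (hc : c ≠ 0)
    (ha : ∀ j, a j ≠ 0) (hf : ∀ j, f j ≠ 0)
    (haq : a 0 * a 1 * a 2 = q) (hfc : f 0 * f 1 * f 2 = q * c ^ 2) :
    ∀ i : ZMod 3,
      (a i + f i ≠ 0) → (1 + a i * f i ≠ 0) →
      (sA5a i a i + sA5f i a f i ≠ 0) → (1 + sA5a i a i * sA5f i a f i ≠ 0) →
      sA5a i (sA5a i a) = a
      ∧ sA5f i (sA5a i a) (sA5f i a f) = f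
      ∧ sA5a i a 0 * sA5a i a 1 * sA5a i a 2 = a 0 * a 1 * a 2
      ∧ sA5f i a f 0 * sA5f i a f 1 * sA5f i a f 2 = f 0 * f 1 * f 2 := by
  intro i h1 h2 h3 h4
  have hA : ∀ k : ZMod 3, k ≠ k - 1 := by decide
  have hB : ∀ k : ZMod 3, k ≠ k + 1 := by decide
  have hC : ∀ k : ZMod 3, k + 1 ≠ k - 1 := by decide
  have hai : a i ≠ 0 := ha i
  have hs : ∀ (A F : ZMod 3 → ℂ) j, sA5f i A F j =
      if j = i - 1 then F j * (1 + A i * F i) / (A i + F i)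
      else if j = i + 1 then F j * (A i + F i) / (1 + A i * F i)
      else F j := fun A F j => rfl
  have hgm : ∀ A F : ZMod 3 → ℂ,
      sA5f i A F (i - 1) = F (i - 1) * (1 + A i * F i) / (A i + F i) := by
    intro A F; rw [hs, if_pos rfl]
  have hgp : ∀ A F : ZMod 3 → ℂ,
      sA5f i A F (i + 1) = F (i + 1) * (A i + F i) / (1 + A i * F i) := by
    intro A F; rw [hs, if_neg (hC i), if_pos rfl]
  have hgo : ∀ (A F : ZMod 3 → ℂ) j, j ≠ i - 1 → j ≠ i + 1 → sA5f i A F j = F j := by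
    intro A F j u v; rw [hs, if_neg u, if_neg v]
  have hii : sA5a i a i = (a i)⁻¹ := by
    rw [show sA5a i a i = a i * a i ^ (-cartanA2 i i) from rfl,
        show cartanA2 i i = (2:ℤ) from if_pos rfl,
        show (-(2:ℤ)) = -1 + -1 by ring, zpow_add₀ hai, zpow_neg_one]
    field_simp
  have hfi : sA5f i a f i = f i := hgo a f i (hA i) (hB i)
  have hfm := hgm a f
  have hfp := hgp a f
  rw [hii, hfi] at h3 h4
  refine ⟨?_, ?_, ?_, ?_⟩
  · funext j
    rw [show sA5a i (sA5a i a) j = (sA5a i a) j * (sA5a i a) i ^ (-cartanA2 i j) from rfl,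
        hii, show (sA5a i a) j = a j * a i ^ (-cartanA2 i j) from rfl,
        inv_zpow, ← zpow_neg, neg_neg, mul_assoc, ← zpow_add₀ hai]
    simp
  · funext j
    by_cases hj1 : j = i - 1
    · subst hj1
      rw [hgm (sA5a i a) (sA5f i a f), hii, hfi, hfm]
      rw [show (1 + (a i)⁻¹ * f i) = (a i + f i) / a i by field_simp,
          show ((a i)⁻¹ + f i) = (1 + a i * f i) / a i by field_simp]
      field_simp
    · by_cases hj2 : j = i + 1
      · subst hj2
        rw [hgp (sA5a i a) (sA5f i a f), hii, hfi, hfp]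
        rw [show (1 + (a i)⁻¹ * f i) = (a i + f i) / a i by field_simp,
            show ((a i)⁻¹ + f i) = (1 + a i * f i) / a i by field_simp]
        field_simp
      · rw [hgo (sA5a i a) (sA5f i a f) j hj1 hj2, hgo a f j hj1 hj2]
  · have hsum : ∀ k : ZMod 3, -cartanA2 k 0 + (-cartanA2 k 1) + (-cartanA2 k 2) = 0 := by decide
    have key : a i ^ (-cartanA2 i 0) * a i ^ (-cartanA2 i 1) * a i ^ (-cartanA2 i 2) = 1 := by
      rw [← zpow_add₀ hai, ← zpow_add₀ hai, hsum i, zpow_zero]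
    calc sA5a i a 0 * sA5a i a 1 * sA5a i a 2
        = (a 0 * a 1 * a 2) * (a i ^ (-cartanA2 i 0) * a i ^ (-cartanA2 i 1) * a i ^ (-cartanA2 i 2)) := by
          rw [show sA5a i a 0 = a 0 * a i ^ (-cartanA2 i 0) from rfl,
              show sA5a i a 1 = a 1 * a i ^ (-cartanA2 i 1) from rfl,
              show sA5a i a 2 = a 2 * a i ^ (-cartanA2 i 2) from rfl]
          ring
      _ = a 0 * a 1 * a 2 := by rw [key, mul_one]
  · have hi3 : ∀ k : ZMod 3, k = 0 ∨ k = 1 ∨ k = 2 := by decide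
    have reorder : ∀ g : ZMod 3 → ℂ, g 0 * g 1 * g 2 = g (i-1) * g i * g (i+1) := by
      rcases hi3 i with h | h | h <;> subst h <;> intro g
      · rw [show ((0:ZMod 3) - 1) = 2 by decide, show ((0:ZMod 3) + 1) = 1 by decide]; try ring
      · rw [show ((1:ZMod 3) - 1) = 0 by decide, show ((1:ZMod 3) + 1) = 2 by decide]; try ring
      · rw [show ((2:ZMod 3) - 1) = 1 by decide, show ((2:ZMod 3) + 1) = 0 by decide]; try ring
    rw [reorder (sA5f i a f), reorder f, hfm, hfi, hfp]
    field_simp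
end

section
/- Let h ≥ 1, ε ∈ ℂ*, γ : ℤ → ℂ with γ(n+2h) = ε·γ(n), and X : ℤ → ℂ* satisfy X(n+2h)·X(n) = −(1/P(n))·(1/P(n) + γ(n)) for all n, where P(n) = ∏_{k=1}^{2h−1} X(n+k). Then for all n the following identity holds: ε/∏_{k=0}^{2h−1} X(n+k+1) − 1/∏_{k=0}^{2h−1} X(n+k+2h) = −ε·∏_{k=0}^{2h−1} X(n+k) + X(n+4h)·∏_{k=0}^{2h−2} X(n+k+2h+1). -/
/-! With `P n = ∏_{k=1}^{2h-1} X (n+k)`, every `2h`-term product in the identity is `P` times one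
boundary factor. The recurrence at `n` and at `n + 2h` then gives
`-ε X n P n = ε / (X (n+2h) P n) + ε γ n / X (n+2h)` and
`X (n+4h) P (n+2h) = -1 / (X (n+2h) P (n+2h)) - γ (n+2h) / X (n+2h)`;
the `γ`-terms cancel because `γ (n + 2h) = ε γ n`. -/

open Finset

lemma prod_range_succ_int_shift {M : Type*} [CommMonoid M] (X : ℤ → M) (N : ℕ) (n : ℤ) :
    ∏ k ∈ range (N + 1), X (n + k) = X n * ∏ k ∈ range N, X (n + k + 1) := by
  rw [prod_range_succ', mul_comm]
  simp only [Nat.cast_add, Nat.cast_one, Nat.cast_zero, add_zero, add_assoc]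

lemma div_sub_div_eq_of_mul_eq {K : Type*} [Field K] {ε g p q x₀ x₁ x₂ : K}
    (hp : p ≠ 0) (hq : q ≠ 0) (hx₁ : x₁ ≠ 0)
    (h₀ : x₁ * x₀ = -(1 / p) * (1 / p + g)) (h₁ : x₂ * x₁ = -(1 / q) * (1 / q + ε * g)) :
    ε / (p * x₁) - 1 / (x₁ * q) = -ε * (x₀ * p) + x₂ * q := by
  field_simp at h₀ h₁ ⊢
  linear_combination ε * q * h₀ - p * h₁

theorem stmt_14_general (h : ℕ) (hh : 1 ≤ h) (ε : ℂ) (γ : ℤ → ℂ)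
    (hγ : ∀ n : ℤ, γ (n + 2 * h) = ε * γ n)
    (X : ℤ → ℂ) (hX : ∀ n : ℤ, X n ≠ 0)
    (hXeq : ∀ n : ℤ,
      X (n + 2 * h) * X n
        = -(1 / ∏ k ∈ Finset.range (2 * h - 1), X (n + k + 1))
            * (1 / (∏ k ∈ Finset.range (2 * h - 1), X (n + k + 1)) + γ n)) :
    ∀ n : ℤ,
      ε / (∏ k ∈ Finset.range (2 * h), X (n + k + 1))
        - 1 / (∏ k ∈ Finset.range (2 * h), X (n + k + 2 * h))
      = -ε * (∏ k ∈ Finset.range (2 * h), X (n + k))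
        + X (n + 4 * h) * ∏ k ∈ Finset.range (2 * h - 1), X (n + k + 2 * h + 1) := by
  intro n
  obtain ⟨N, hN⟩ : ∃ N, 2 * h = N + 1 := ⟨2 * h - 1, by omega⟩
  have hN' : 2 * h - 1 = N := by omega
  have hNz : (2 * h : ℤ) = N + 1 := by exact_mod_cast hN
  set P : ℤ → ℂ := fun n => ∏ k ∈ range N, X (n + k + 1)
  have hP : ∀ n, P n ≠ 0 := fun n => prod_ne_zero_iff.mpr fun k _ => hX _
  have e₀ : X (n + 2 * h) * X n = -(1 / P n) * (1 / P n + γ n) := by rw [hXeq, hN']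
  have e₁ : X (n + 4 * h) * X (n + 2 * h)
      = -(1 / P (n + 2 * h)) * (1 / P (n + 2 * h) + ε * γ n) := by
    rw [← hγ, show n + 4 * h = n + 2 * h + 2 * h by ring, hXeq, hN']
  have hprodSucc : ∏ k ∈ range (2 * h), X (n + k + 1) = P n * X (n + 2 * h) := by
    rw [hN, prod_range_succ, hNz, add_assoc n]
  have hprod : ∏ k ∈ range (2 * h), X (n + k) = X n * P n := by
    rw [hN, prod_range_succ_int_shift]
  have hprodShift : ∏ k ∈ range (2 * h), X (n + k + 2 * h) = X (n + 2 * h) * P (n + 2 * h) := by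
    rw [hN, ← prod_range_succ_int_shift]
    exact prod_congr rfl fun k _ => by ring_nf
  have hPShift : ∏ k ∈ range (2 * h - 1), X (n + k + 2 * h + 1) = P (n + 2 * h) := by
    rw [hN']
    exact prod_congr rfl fun k _ => by ring_nf
  rw [hprodSucc, hprod, hprodShift, hPShift]
  exact div_sub_div_eq_of_mul_eq (hP n) (hP _) (hX _) e₀ e₁

theorem stmt_14 (h : ℕ) (hh : 1 ≤ h) (ε : ℂ) (hε : ε ≠ 0) (γ : ℤ → ℂ)
    (hγ : ∀ n : ℤ, γ (n + 2 * h) = ε * γ n)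
    (X : ℤ → ℂ) (hX : ∀ n : ℤ, X n ≠ 0)
    (hXeq : ∀ n : ℤ,
      X (n + 2 * h) * X n
        = -(1 / ∏ k ∈ Finset.range (2 * h - 1), X (n + k + 1))
            * (1 / (∏ k ∈ Finset.range (2 * h - 1), X (n + k + 1)) + γ n)) :
    ∀ n : ℤ,
      ε / (∏ k ∈ Finset.range (2 * h), X (n + k + 1))
        - 1 / (∏ k ∈ Finset.range (2 * h), X (n + k + 2 * h))
      = -ε * (∏ k ∈ Finset.range (2 * h), X (n + k))
        + X (n + 4 * h) * ∏ k ∈ Finset.range (2 * h - 1), X (n + k + 2 * h + 1) :=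
  stmt_14_general h hh ε γ hγ X hX hXeq
end
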